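/- arXiv:1612.05550 — 6 statements merged into one kernel-verified Lean document; each statement's English description precedes it below -/
import Mathlib

section
/- Let Q₁ be the normalized Weyl-invariant quadratic form on 𝔞 = X_*(T_sc)_ℚ for an irreducible root system (values on coroots in {1,ℓ}), with polarization B₁. Then: (1) Q₁ takes integer values on the coroot lattice X_*(T_sc); (2) B₁(x,y) ∈ ℤ whenever x ∈ X_*(T_sc) and y ∈ X_*(T_ad) (the coweight lattice). -/
open QuadraticMap Module

/-- Let `Q₁` be the normalized Weyl-invariant quadratic form on
`𝔞 = X_*(T_sc)_ℚ` for an irreducible (reduced, crystallographic) root system (values on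
coroots in `{1,ℓ}`), with polarization `B₁`.  Then:
(1) `Q₁` takes integer values on the coroot lattice `X_*(T_sc)` (the `ℤ`-span of the coroots);
(2) `B₁(x,y) ∈ ℤ` whenever `x ∈ X_*(T_sc)` and `y ∈ X_*(T_ad)`, the coweight lattice
`{y | ⟨α, y⟩ ∈ ℤ for all roots α}`. -/
theorem stmt7 {ι M N : Type*} [Fintype ι] [AddCommGroup M] [Module ℚ M]
    [AddCommGroup N] [Module ℚ N]
    (P : RootPairing ι ℚ M N) [P.IsRootSystem]
    (hcrys : P.IsCrystallographic) (hred : P.IsReduced)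
    (hirr : ∀ L : Submodule ℚ M,
      (∀ i, L.map (P.reflection i).toLinearMap = L) → L = ⊥ ∨ L = ⊤)
    (ℓ : ℚ) (hℓ : ℓ = 1 ∨ ℓ = 2 ∨ ℓ = 3)
    (Q₁ : QuadraticForm ℚ N)
    (hQ₁W : ∀ i x, Q₁ (P.coreflection i x) = Q₁ x)
    (hQ₁val : ∀ i, Q₁ (P.coroot i) = 1 ∨ Q₁ (P.coroot i) = ℓ) :
    (∀ x ∈ Submodule.span ℤ (Set.range P.coroot), ∃ n : ℤ, Q₁ x = (n : ℚ)) ∧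
    (∀ x ∈ Submodule.span ℤ (Set.range P.coroot), ∀ y : N,
      (∀ i, ∃ m : ℤ, P.root' i y = (m : ℚ)) → ∃ n : ℤ, polar Q₁ x y = (n : ℚ)) := by
  have expand : ∀ a b : N, Q₁ (a + b) = Q₁ a + Q₁ b + polar Q₁ a b := by
    intro a b; rw [polar]; ring
  -- key identity, first for ⟨α_i, y⟩ ≠ 0
  have key' : ∀ i (y : N), P.root' i y ≠ 0 →
      polar Q₁ (P.coroot i) y = P.root' i y * Q₁ (P.coroot i) := by
    intro i y hc0
    have h := hQ₁W i y
    rw [P.coreflection_apply] at h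
    set c := P.root' i y with hc
    have hexp : Q₁ (y - c • P.coroot i)
        = Q₁ y - c * polar Q₁ (P.coroot i) y + c * c * Q₁ (P.coroot i) := by
      rw [sub_eq_add_neg, expand, show (-(c • P.coroot i)) = (-c) • P.coroot i by simp,
        QuadraticMap.map_smul, polar_comm, polar_smul_left]
      simp only [smul_eq_mul]
      ring
    rw [hexp] at h
    have h2 : c * polar Q₁ (P.coroot i) y = c * (c * Q₁ (P.coroot i)) := by ring_nf; linarith
    have := mul_left_cancel₀ hc0 h2
    rw [this]
  have key : ∀ i (y : N),
      polar Q₁ (P.coroot i) y = P.root' i y * Q₁ (P.coroot i) := by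
    intro i y
    by_cases hc0 : P.root' i y = 0
    · have h2 : P.root' i (y + P.coroot i) ≠ 0 := by
        rw [map_add, hc0, zero_add, P.root_coroot_eq_pairing, P.pairing_same]
        norm_num
      have := key' i (y + P.coroot i) h2
      rw [polar_add_right, map_add, hc0, P.root_coroot_eq_pairing, P.pairing_same,
        polar_self] at this
      simp only [nsmul_eq_mul, smul_eq_mul] at this
      norm_num at this
      rw [hc0, zero_mul]
      linarith
    · exact key' i y hc0
  have hℓint : ∃ k : ℤ, ℓ = (k : ℚ) := by
    rcases hℓ with h | h | h
    exacts [⟨1, by simp [h]⟩, ⟨2, by simp [h]⟩, ⟨3, by simp [h]⟩]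
  have hQint : ∀ i, ∃ k : ℤ, Q₁ (P.coroot i) = (k : ℚ) := by
    intro i
    rcases hQ₁val i with h | h
    · exact ⟨1, by simp [h]⟩
    · obtain ⟨k, hk⟩ := hℓint; exact ⟨k, by rw [h, hk]⟩
  -- part 2
  have part2 : ∀ x ∈ Submodule.span ℤ (Set.range P.coroot), ∀ y : N,
      (∀ i, ∃ m : ℤ, P.root' i y = (m : ℚ)) → ∃ n : ℤ, polar Q₁ x y = (n : ℚ) := by
    intro x hx y hy
    induction hx using Submodule.span_induction with
    | mem x hx =>
      obtain ⟨i, rfl⟩ := hx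
      obtain ⟨m, hm⟩ := hy i
      obtain ⟨k, hk⟩ := hQint i
      exact ⟨m * k, by rw [key, hm, hk]; push_cast; ring⟩
    | zero => exact ⟨0, by simp⟩
    | add a b _ _ ha hb =>
      obtain ⟨n₁, h₁⟩ := ha; obtain ⟨n₂, h₂⟩ := hb
      exact ⟨n₁ + n₂, by rw [polar_add_left, h₁, h₂]; push_cast; ring⟩
    | smul n a _ ha =>
      obtain ⟨m, hm⟩ := ha
      refine ⟨n * m, ?_⟩
      rw [show (n : ℤ) • a = (n : ℚ) • a from (Int.cast_smul_eq_zsmul ℚ n a).symm,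
        polar_smul_left, hm, smul_eq_mul]
      push_cast; ring
  refine ⟨?_, part2⟩
  -- coroots pair integrally with everything in the coroot span
  have hcw : ∀ x ∈ Submodule.span ℤ (Set.range P.coroot),
      ∀ i, ∃ m : ℤ, P.root' i x = (m : ℚ) := by
    intro x hx i
    induction hx using Submodule.span_induction with
    | mem x hx =>
      obtain ⟨j, rfl⟩ := hx
      obtain ⟨z, hz⟩ := hcrys.exists_value i j
      exact ⟨z, by rw [P.root_coroot_eq_pairing]; simpa using hz.symm⟩
    | zero => exact ⟨0, by simp⟩
    | add a b _ _ ha hb =>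
      obtain ⟨n₁, h₁⟩ := ha; obtain ⟨n₂, h₂⟩ := hb
      exact ⟨n₁ + n₂, by rw [map_add, h₁, h₂]; push_cast; ring⟩
    | smul n a _ ha =>
      obtain ⟨m, hm⟩ := ha
      refine ⟨n * m, ?_⟩
      rw [map_zsmul, hm, zsmul_eq_mul]
      push_cast; ring
  intro x hx
  induction hx using Submodule.span_induction with
  | mem x hx => obtain ⟨i, rfl⟩ := hx; exact hQint i
  | zero => exact ⟨0, by simp⟩
  | add a b ha' hb' ha hb =>
    obtain ⟨n₁, h₁⟩ := ha; obtain ⟨n₂, h₂⟩ := hb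
    obtain ⟨n₃, h₃⟩ := part2 a ha' b (hcw b hb')
    exact ⟨n₁ + n₂ + n₃, by rw [expand, h₁, h₂, h₃]; push_cast; ring⟩
  | smul n a _ ha =>
    obtain ⟨m, hm⟩ := ha
    refine ⟨n * n * m, ?_⟩
    rw [show (n : ℤ) • a = (n : ℚ) • a from (Int.cast_smul_eq_zsmul ℚ n a).symm,
      QuadraticMap.map_smul, hm, smul_eq_mul]
    push_cast; ring
end

section
/- Let D be a quaternion algebra over a field F with canonical involution y ↦ ȳ and reduced norm quadratic form Q_D(y) = yȳ on the 4-dimensional space D. Then the Clifford algebra C(Q_D) is isomorphic as a ℤ/2-graded algebra to M₂(D), the 2×2 matrices over D, graded with diagonal matrices as even part and anti-diagonal matrices as odd part. -/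
open Module CliffordAlgebra

set_option linter.unusedSectionVars false
set_option maxHeartbeats 1000000

section Span
variable {R M : Type*} [CommRing R] [AddCommGroup M] [Module R M] (Q : QuadraticForm R M)
variable {n : Type*} [Fintype n] [LinearOrder n] (v : n → M)

/-- product of `ι Q (v i)` over a list of indices -/
noncomputable def qprod (l : List n) : CliffordAlgebra Q :=
  (l.map fun i => CliffordAlgebra.ι Q (v i)).prod

lemma qprod_nil : qprod Q v [] = 1 := rfl

lemma qprod_cons (i : n) (l : List n) :
    qprod Q v (i :: l) = CliffordAlgebra.ι Q (v i) * qprod Q v l := by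
  simp [qprod]

lemma key_lemma (l : List n) (hl : l.Pairwise (· < ·)) (i : n) :
    CliffordAlgebra.ι Q (v i) * qprod Q v l ∈
      Submodule.span R {x | ∃ m : List n, m.Pairwise (· < ·) ∧ (∀ a ∈ m, a ∈ i :: l) ∧
        x = qprod Q v m} := by
  induction l generalizing i with
  | nil =>
      apply Submodule.subset_span
      exact ⟨[i], List.pairwise_singleton _ i, by simp, by simp [qprod_nil, qprod_cons]⟩
  | cons j t ih =>
      rw [List.pairwise_cons] at hl
      obtain ⟨hjt, hst⟩ := hl
      rcases lt_trichotomy i j with hij | hij | hij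
      · apply Submodule.subset_span
        refine ⟨i :: j :: t, ?_, by intro a ha; exact ha, (qprod_cons ..).symm⟩
        rw [List.pairwise_cons]
        refine ⟨?_, List.pairwise_cons.2 ⟨hjt, hst⟩⟩
        intro b hb
        rcases List.mem_cons.1 hb with rfl | hb
        · exact hij
        · exact hij.trans (hjt b hb)
      · subst hij
        rw [qprod_cons, ← mul_assoc, ι_sq_scalar, ← Algebra.smul_def]
        exact Submodule.smul_mem _ _ (Submodule.subset_span
          ⟨t, hst, fun a ha => by simp [ha], rfl⟩)
      · have hswap : CliffordAlgebra.ι Q (v i) * CliffordAlgebra.ι Q (v j) =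
            algebraMap R _ (QuadraticMap.polar Q (v i) (v j))
              - CliffordAlgebra.ι Q (v j) * CliffordAlgebra.ι Q (v i) :=
          eq_sub_of_add_eq (CliffordAlgebra.ι_mul_ι_add_swap _ _)
        rw [qprod_cons, ← mul_assoc, hswap, sub_mul, ← Algebra.smul_def, mul_assoc]
        refine Submodule.sub_mem _
          (Submodule.smul_mem _ _ (Submodule.subset_span
            ⟨t, hst, fun a ha => by simp [ha], rfl⟩)) ?_
        have h2 := ih hst i
        refine Submodule.span_induction (p := fun w _ =>
            CliffordAlgebra.ι Q (v j) * w ∈ Submodule.span R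
              {x | ∃ m : List n, m.Pairwise (· < ·) ∧ (∀ a ∈ m, a ∈ i :: j :: t) ∧
                x = qprod Q v m}) ?_ ?_ ?_ ?_ h2
        · rintro x ⟨m, hm, hmem, rfl⟩
          apply Submodule.subset_span
          have hjm : ∀ a ∈ m, j < a := by
            intro a ha
            rcases List.mem_cons.1 (hmem a ha) with rfl | h
            · exact hij
            · exact hjt a h
          refine ⟨j :: m, List.pairwise_cons.2 ⟨hjm, hm⟩, ?_, (qprod_cons ..).symm⟩
          intro a ha
          rcases List.mem_cons.1 ha with rfl | h
          · simp
          · rcases List.mem_cons.1 (hmem a h) with rfl | h'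
            · simp
            · simp [h']
        · simp
        · intro x y _ _ hx hy
          rw [mul_add]; exact Submodule.add_mem _ hx hy
        · intro c x _ hx
          rw [mul_smul_comm]; exact Submodule.smul_mem _ _ hx
set_option linter.unusedSectionVars false in
lemma qprod_span_top (hv : Submodule.span R (Set.range v) = ⊤) :
    Submodule.span R
      (Set.range fun s : Finset n => qprod Q v (s.sort (· ≤ ·))) = ⊤ := by
  set W := Submodule.span R
      (Set.range fun s : Finset n => qprod Q v (s.sort (· ≤ ·))) with hW
  have hsub : ∀ (m : List n), m.Pairwise (· < ·) → qprod Q v m ∈ W := by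
    intro m hm
    exact Submodule.subset_span
      ⟨m.toFinset, by simp only [(List.toFinset_sort _ hm.nodup).2 (hm.imp le_of_lt)]⟩
  have hone : (1 : CliffordAlgebra Q) ∈ W := by
    have := hsub [] (by simp)
    simpa [qprod_nil] using this
  have h1 : ∀ (i : n) (w : CliffordAlgebra Q), w ∈ W →
      CliffordAlgebra.ι Q (v i) * w ∈ W := by
    intro i w hw
    refine Submodule.span_induction (p := fun w _ => CliffordAlgebra.ι Q (v i) * w ∈ W)
      ?_ (by simp) ?_ ?_ hw
    · rintro x ⟨s, rfl⟩
      have hk := key_lemma Q v (s.sort (· ≤ ·)) (List.sortedLT_iff_pairwise.1 s.sortedLT_sort) i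
      refine Submodule.span_le.2 ?_ hk
      rintro x ⟨m, hm, -, rfl⟩
      exact hsub m hm
    · intro x y _ _ hx hy
      rw [mul_add]; exact Submodule.add_mem _ hx hy
    · intro c x _ hx
      rw [mul_smul_comm]; exact Submodule.smul_mem _ _ hx
  have h2 : ∀ (m : M) (w : CliffordAlgebra Q), w ∈ W →
      CliffordAlgebra.ι Q m * w ∈ W := by
    intro m
    have hm : m ∈ Submodule.span R (Set.range v) := hv ▸ Submodule.mem_top
    refine Submodule.span_induction (p := fun m _ => ∀ (w : CliffordAlgebra Q), w ∈ W →
      CliffordAlgebra.ι Q m * w ∈ W) ?_ (by simp) ?_ ?_ hm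
    · rintro x ⟨i, rfl⟩; exact h1 i
    · intro x y _ _ hx hy w hw
      rw [map_add, add_mul]; exact Submodule.add_mem _ (hx w hw) (hy w hw)
    · intro c x _ hx w hw
      rw [map_smul, smul_mul_assoc]; exact Submodule.smul_mem _ _ (hx w hw)
  have h3 : ∀ (x : CliffordAlgebra Q) (w : CliffordAlgebra Q), w ∈ W → x * w ∈ W := by
    intro x
    induction x using CliffordAlgebra.induction with
    | algebraMap r => intro w hw; rw [← Algebra.smul_def]; exact Submodule.smul_mem _ _ hw
    | ι m => exact h2 m
    | mul a b ha hb => intro w hw; rw [mul_assoc]; exact ha _ (hb _ hw)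
    | add a b ha hb => intro w hw; rw [add_mul]; exact Submodule.add_mem _ (ha w hw) (hb w hw)
  refine top_le_iff.1 ?_
  intro x _
  simpa using h3 x 1 hone

end Span

section Rank
variable {F M : Type*} [Field F] [AddCommGroup M] [Module F M] [FiniteDimensional F M]
variable (Q : QuadraticForm F M)

lemma clifford_finite : Module.Finite F (CliffordAlgebra Q) := by
  classical
  set b := finBasis F M
  set p := fun s : Finset (Fin (finrank F M)) => qprod Q (⇑b) (s.sort (· ≤ ·)) with hp
  have hspan : Submodule.span F (Set.range p) = ⊤ := qprod_span_top Q _ b.span_eq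
  exact ⟨⟨Finset.univ.image p, by
    rw [Finset.coe_image, Finset.coe_univ, Set.image_univ, hspan]⟩⟩

lemma clifford_finrank_le : finrank F (CliffordAlgebra Q) ≤ 2 ^ finrank F M := by
  classical
  set b := finBasis F M
  set p := fun s : Finset (Fin (finrank F M)) => qprod Q (⇑b) (s.sort (· ≤ ·)) with hp
  have hspan : Submodule.span F (Set.range p) = ⊤ := qprod_span_top Q _ b.span_eq
  have h : finrank F (Submodule.span F (Set.range p)) ≤
      Fintype.card (Finset (Fin (finrank F M))) := finrank_range_le_card (R := F) p
  rw [hspan] at h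
  simpa [finrank_top, Fintype.card_finset] using h
end Rank

section Aux
variable {F : Type*} [Field F] {D : Type*} [Ring D] [Algebra F D]

/-- The linear map `y ↦ [[0, conj y],[y, 0]]`. -/
def fmat (conj : D →ₗ[F] D) : D →ₗ[F] Matrix (Fin 2) (Fin 2) D where
  toFun y := Matrix.of ![![0, conj y], ![y, 0]]
  map_add' y z := by
    ext i j
    fin_cases i <;> fin_cases j <;> simp [Matrix.add_apply]
  map_smul' c y := by
    ext i j
    fin_cases i <;> fin_cases j <;> simp [Matrix.smul_apply]

variable (conj : D →ₗ[F] D)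

lemma fmat_apply (y : D) : fmat conj y = Matrix.of ![![0, conj y], ![y, 0]] := rfl

lemma fmat_mul_fmat (y z : D) :
    fmat conj y * fmat conj z = Matrix.of ![![conj y * z, 0], ![0, y * conj z]] := by
  ext i j
  fin_cases i <;> fin_cases j <;>
    simp [fmat_apply, Matrix.mul_apply, Fin.sum_univ_two]
end Aux

section Aux2
variable {F : Type*} [Field F] {D : Type*} [Ring D] [Algebra F D]
variable (conj : D →ₗ[F] D) (QD : QuadraticForm F D)

lemma fmat_sq (hcomm : ∀ y : D, y * conj y = conj y * y)
    (hQD : ∀ y, algebraMap F D (QD y) = y * conj y) (y : D) :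
    fmat conj y * fmat conj y = algebraMap F (Matrix (Fin 2) (Fin 2) D) (QD y) := by
  rw [fmat_mul_fmat]
  ext i j
  fin_cases i <;> fin_cases j <;>
    simp [Matrix.algebraMap_matrix_apply, hQD, hcomm]

/-- The algebra map from the Clifford algebra to 2×2 matrices. -/
noncomputable def phi (hcomm : ∀ y : D, y * conj y = conj y * y)
    (hQD : ∀ y, algebraMap F D (QD y) = y * conj y) :
    CliffordAlgebra QD →ₐ[F] Matrix (Fin 2) (Fin 2) D :=
  CliffordAlgebra.lift QD ⟨fmat conj, fmat_sq conj QD hcomm hQD⟩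

lemma phi_ι (hcomm) (hQD) (y : D) :
    phi conj QD hcomm hQD (CliffordAlgebra.ι QD y) = fmat conj y :=
  CliffordAlgebra.lift_ι_apply _ _ _
end Aux2

section Surj
variable {F : Type*} [Field F] {D : Type*} [Ring D] [Algebra F D]

/-- diagonal 2×2 matrix -/
def dmat (a b : D) : Matrix (Fin 2) (Fin 2) D := Matrix.of ![![a, 0], ![0, b]]

/-- antidiagonal 2×2 matrix -/
def amat (a b : D) : Matrix (Fin 2) (Fin 2) D := Matrix.of ![![0, a], ![b, 0]]

lemma dmat_mul_dmat (a b c d : D) : dmat a b * dmat c d = dmat (a * c) (b * d) := by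
  ext i j
  fin_cases i <;> fin_cases j <;> simp [dmat, Matrix.mul_apply, Fin.sum_univ_two]

lemma dmat_sub_dmat (a b c d : D) : dmat a b - dmat c d = dmat (a - c) (b - d) := by
  ext i j
  fin_cases i <;> fin_cases j <;> simp [dmat]

lemma dmat_add_amat (a b c d : D) : dmat a b + amat c d = Matrix.of ![![a, c], ![d, b]] := by
  ext i j
  fin_cases i <;> fin_cases j <;> simp [dmat, amat]

lemma dmat_mul_amat (a b c d : D) : dmat a b * amat c d = amat (a * c) (b * d) := by
  ext i j
  fin_cases i <;> fin_cases j <;> simp [dmat, amat, Matrix.mul_apply, Fin.sum_univ_two]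

lemma eq_dmat_add_amat (m : Matrix (Fin 2) (Fin 2) D) :
    m = dmat (m 0 0) (m 1 1) + amat (m 0 1) (m 1 0) := by
  ext i j
  fin_cases i <;> fin_cases j <;> simp [dmat, amat]

variable [IsSimpleRing D] (conj : D →ₗ[F] D) (QD : QuadraticForm F D)

lemma phi_surjective
    (hdim : finrank F D = 4)
    (hcentral : ∀ z : D, (∀ d : D, z * d = d * z) → ∃ c : F, z = algebraMap F D c)
    (hanti : ∀ y z : D, conj (y * z) = conj z * conj y)
    (hone : conj 1 = 1)
    (hinvol : ∀ y, conj (conj y) = y)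
    (hcomm : ∀ y : D, y * conj y = conj y * y)
    (hQD : ∀ y, algebraMap F D (QD y) = y * conj y) :
    Function.Surjective (phi conj QD hcomm hQD) := by
  set R := (phi conj QD hcomm hQD).range with hR
  have he : ∀ y : D, fmat conj y ∈ R := fun y =>
    ⟨CliffordAlgebra.ι QD y, phi_ι conj QD hcomm hQD y⟩
  have hfd : ∀ y z : D, fmat conj y * fmat conj z = dmat (conj y * z) (y * conj z) := by
    intro y z; rw [fmat_mul_fmat]; rfl
  have hdiag : ∀ y : D, dmat (conj y) y ∈ R := by
    intro y
    have := R.mul_mem (he y) (he 1)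
    rwa [hfd, hone, mul_one, mul_one] at this
  have hdiag' : ∀ y : D, dmat y (conj y) ∈ R := by
    intro y
    have := hdiag (conj y)
    rwa [hinvol] at this
  have hconjsurj : Function.Surjective conj := fun y => ⟨conj y, hinvol y⟩
  -- the second-coordinate ideal
  let J : TwoSidedIdeal D := TwoSidedIdeal.mk' {b | dmat 0 b ∈ R}
    (by simpa using (show dmat 0 0 ∈ R by
      have : dmat 0 0 = (0 : Matrix (Fin 2) (Fin 2) D) := by
        ext i j; fin_cases i <;> fin_cases j <;> simp [dmat]
      rw [this]; exact R.toSubmodule.zero_mem))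
    (fun {x y} hx hy => by
      have h := R.toSubmodule.add_mem hx hy
      have : dmat 0 x + dmat 0 y = dmat 0 (x + y) := by
        ext i j; fin_cases i <;> fin_cases j <;> simp [dmat]
      rwa [this] at h)
    (fun {x} hx => by
      have h := R.toSubmodule.neg_mem hx
      have : -dmat 0 x = dmat 0 (-x) := by
        ext i j; fin_cases i <;> fin_cases j <;> simp [dmat]
      rwa [this] at h)
    (fun {x y} hy => by
      have h := R.mul_mem (hdiag x) hy
      rwa [dmat_mul_dmat, mul_zero] at h)
    (fun {x y} hx => by
      have h := R.mul_mem hx (hdiag y)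
      rwa [dmat_mul_dmat, zero_mul] at h)
  have hJmem : ∀ b : D, b ∈ J ↔ dmat 0 b ∈ R := fun b => TwoSidedIdeal.mem_mk' _ _ _ _ _ _ b
  rcases eq_bot_or_eq_top J with hbot | htop
  · -- J = ⊥ implies D is commutative, contradiction
    exfalso
    have hcomm' : ∀ a b : D, a * b = b * a := by
      intro a b
      have h1 : dmat (conj a * conj b) (a * b) ∈ R := by
        have := R.mul_mem (hdiag a) (hdiag b); rwa [dmat_mul_dmat] at this
      have h2 : dmat (conj a * conj b) (b * a) ∈ R := by
        have := hdiag (b * a); rwa [hanti] at this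
      have h3 := R.toSubmodule.sub_mem h1 h2
      rw [dmat_sub_dmat, sub_self] at h3
      have : a * b - b * a ∈ J := (hJmem _).2 h3
      rw [hbot, TwoSidedIdeal.mem_bot] at this
      exact sub_eq_zero.1 this
    have : ∀ z : D, ∃ c : F, z = algebraMap F D c := fun z =>
      hcentral z (fun d => hcomm' z d)
    have hsurjF : Function.Surjective (Algebra.linearMap F D) := by
      intro z; obtain ⟨c, hc⟩ := this z; exact ⟨c, hc.symm⟩
    have h4 : finrank F D ≤ finrank F F := by
      have h5 := LinearMap.finrank_range_le (Algebra.linearMap F D)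
      rwa [LinearMap.range_eq_top.2 hsurjF, finrank_top] at h5
    rw [hdim, finrank_self] at h4
    omega
  · -- J = ⊤: R is everything
    have h1 : dmat 0 1 ∈ R := (hJmem 1).1 (htop ▸ trivial)
    have hd0 : ∀ b : D, dmat 0 b ∈ R := by
      intro b
      have := R.mul_mem (hdiag b) h1
      rwa [dmat_mul_dmat, mul_zero, mul_one] at this
    have hd1 : ∀ a : D, dmat a 0 ∈ R := by
      intro a
      obtain ⟨y, rfl⟩ := hconjsurj a
      have := R.toSubmodule.sub_mem (hdiag y) (hd0 y)
      rwa [dmat_sub_dmat, sub_zero, sub_self] at this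
    have hd : ∀ a b : D, dmat a b ∈ R := by
      intro a b
      have := R.toSubmodule.add_mem (hd1 a) (hd0 b)
      have he' : dmat a 0 + dmat 0 b = dmat a b := by
        ext i j; fin_cases i <;> fin_cases j <;> simp [dmat]
      rwa [he'] at this
    have ha : ∀ a b : D, amat a b ∈ R := by
      intro a b
      have h2 : fmat conj 1 = amat 1 1 := by
        ext i j; fin_cases i <;> fin_cases j <;> simp [fmat_apply, amat, hone]
      have := R.mul_mem (hd a b) (he 1)
      rwa [h2, dmat_mul_amat, mul_one, mul_one] at this
    intro m
    have : m ∈ R := by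
      rw [eq_dmat_add_amat (D := D) m]
      exact R.toSubmodule.add_mem (hd _ _) (ha _ _)
    exact this
end Surj


lemma dmat_mul_entries {F : Type*} [Field F] {D : Type*} [Ring D] [Algebra F D]
    (a b : D) (M : Matrix (Fin 2) (Fin 2) D) :
    (dmat a b * M) 0 0 = a * M 0 0 ∧ (dmat a b * M) 0 1 = a * M 0 1 ∧
    (dmat a b * M) 1 0 = b * M 1 0 ∧ (dmat a b * M) 1 1 = b * M 1 1 := by
  refine ⟨?_, ?_, ?_, ?_⟩ <;> simp [dmat, Matrix.mul_apply, Fin.sum_univ_two]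

/-- Let `D` be a quaternion algebra over a field `F` (a central simple
`F`-algebra of dimension 4) with canonical involution `y ↦ conj y` (characterized by
`y + conj y` being the reduced trace and `y * conj y = conj y * y` the reduced norm) and
reduced norm quadratic form `Q_D(y) = y * conj y` on the 4-dimensional space `D`.  Then the
Clifford algebra `C(Q_D)` is isomorphic as a `ℤ/2`-graded `F`-algebra to `M₂(D)`, graded
with the diagonal matrices as even part and the antidiagonal matrices as odd part. -/
theorem stmt9 {F : Type*} [Field F]
    {D : Type*} [Ring D] [Algebra F D] [IsSimpleRing D]
    (hdim : finrank F D = 4)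
    (hcentral : ∀ z : D, (∀ d : D, z * d = d * z) → ∃ c : F, z = algebraMap F D c)
    (conj : D →ₗ[F] D)
    (hanti : ∀ y z : D, conj (y * z) = conj z * conj y)
    (hone : conj 1 = 1)
    (hinvol : ∀ y, conj (conj y) = y)
    (htrace : ∀ y : D, ∃ t : F, y + conj y = algebraMap F D t)
    (hcomm : ∀ y : D, y * conj y = conj y * y)
    (QD : QuadraticForm F D) (hQD : ∀ y, algebraMap F D (QD y) = y * conj y) :
    ∃ eqv : CliffordAlgebra QD ≃ₐ[F] Matrix (Fin 2) (Fin 2) D,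
      (∀ m : CliffordAlgebra QD,
        (m ∈ evenOdd QD 0 ↔ eqv m 0 1 = 0 ∧ eqv m 1 0 = 0) ∧
        (m ∈ evenOdd QD 1 ↔ eqv m 0 0 = 0 ∧ eqv m 1 1 = 0)) := by
  classical
  haveI hFD : FiniteDimensional F D := FiniteDimensional.of_finrank_pos (by rw [hdim]; norm_num)
  haveI := clifford_finite QD
  set φ := phi conj QD hcomm hQD with hφ
  have hsurj : Function.Surjective φ :=
    phi_surjective conj QD hdim hcentral hanti hone hinvol hcomm hQD
  have hinj : Function.Injective φ := by
    have hr : finrank F (Matrix (Fin 2) (Fin 2) D) = 16 := by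
      rw [Module.finrank_matrix]
      simp [hdim]
    have hle : finrank F (CliffordAlgebra QD) ≤ 16 := by
      have h := clifford_finrank_le QD
      rw [hdim] at h
      norm_num at h
      exact h
    have hrange : LinearMap.range φ.toLinearMap = ⊤ := LinearMap.range_eq_top.2 hsurj
    have hrn := LinearMap.finrank_range_add_finrank_ker φ.toLinearMap
    rw [hrange, finrank_top, hr] at hrn
    have hker : finrank F (LinearMap.ker φ.toLinearMap) = 0 := by omega
    rw [Submodule.finrank_eq_zero] at hker
    exact (LinearMap.ker_eq_bot (f := φ.toLinearMap)).1 hker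
  -- the even and odd parts map to diagonal resp. antidiagonal matrices
  have heven : ∀ x ∈ evenOdd QD 0, φ x 0 1 = 0 ∧ φ x 1 0 = 0 := by
    intro x hx
    refine CliffordAlgebra.even_induction QD
      (motive := fun x _ => φ x 0 1 = 0 ∧ φ x 1 0 = 0) ?_ ?_ ?_ x hx
    · intro r
      constructor <;> simp [AlgHom.commutes, Matrix.algebraMap_matrix_apply]
    · intro x y hx hy ⟨h1, h2⟩ ⟨h3, h4⟩
      constructor <;> simp [Matrix.add_apply, h1, h2, h3, h4]
    · intro m₁ m₂ x hx ⟨h1, h2⟩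
      have hm : φ (CliffordAlgebra.ι QD m₁ * CliffordAlgebra.ι QD m₂ * x)
          = dmat (conj m₁ * m₂) (m₁ * conj m₂) * φ x := by
        rw [map_mul, map_mul, hφ, phi_ι, phi_ι, fmat_mul_fmat]
        rfl
      obtain ⟨e1, e2, e3, e4⟩ := dmat_mul_entries (F := F) (conj m₁ * m₂) (m₁ * conj m₂) (φ x)
      rw [hm]
      exact ⟨by rw [e2, h1, mul_zero], by rw [e3, h2, mul_zero]⟩
  have hodd : ∀ x ∈ evenOdd QD 1, φ x 0 0 = 0 ∧ φ x 1 1 = 0 := by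
    intro x hx
    refine CliffordAlgebra.odd_induction QD
      (P := fun x _ => φ x 0 0 = 0 ∧ φ x 1 1 = 0) ?_ ?_ ?_ x hx
    · intro v
      rw [hφ, phi_ι]
      constructor <;> simp [fmat_apply]
    · intro x y hx hy ⟨h1, h2⟩ ⟨h3, h4⟩
      constructor <;> simp [Matrix.add_apply, h1, h2, h3, h4]
    · intro m₁ m₂ x hx ⟨h1, h2⟩
      have hm : φ (CliffordAlgebra.ι QD m₁ * CliffordAlgebra.ι QD m₂ * x)
          = dmat (conj m₁ * m₂) (m₁ * conj m₂) * φ x := by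
        rw [map_mul, map_mul, hφ, phi_ι, phi_ι, fmat_mul_fmat]
        rfl
      obtain ⟨e1, e2, e3, e4⟩ := dmat_mul_entries (F := F) (conj m₁ * m₂) (m₁ * conj m₂) (φ x)
      rw [hm]
      exact ⟨by rw [e1, h1, mul_zero], by rw [e4, h2, mul_zero]⟩
  -- decomposition of an arbitrary element
  have hdec : ∀ m : CliffordAlgebra QD,
      m = (DirectSum.decompose (evenOdd QD) m 0 : CliffordAlgebra QD)
        + (DirectSum.decompose (evenOdd QD) m 1 : CliffordAlgebra QD) := by
    intro m
    have h := DirectSum.sum_support_decompose (evenOdd QD) m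
    have h2 := Finset.sum_subset
      (Finset.subset_univ (DFinsupp.support (DirectSum.decompose (evenOdd QD) m)))
      (f := fun i => (DirectSum.decompose (evenOdd QD) m i : CliffordAlgebra QD))
      (fun i _ hi => by simp only []; rw [DFinsupp.notMem_support_iff.1 hi]; exact ZeroMemClass.coe_zero _)
    have h3 : ∑ i : ZMod 2, (DirectSum.decompose (evenOdd QD) m i : CliffordAlgebra QD) = m :=
      h2.symm.trans h
    have huniv : (Finset.univ : Finset (ZMod 2)) = {0, 1} := by decide
    rw [huniv, Finset.sum_pair (by decide : (0 : ZMod 2) ≠ 1)] at h3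
    exact h3.symm
  refine ⟨AlgEquiv.ofBijective φ ⟨hinj, hsurj⟩, ?_⟩
  intro m
  have heqv : ∀ x : CliffordAlgebra QD, AlgEquiv.ofBijective φ ⟨hinj, hsurj⟩ x = φ x :=
    fun _ => rfl
  simp only [heqv]
  set m0 : CliffordAlgebra QD := (DirectSum.decompose (evenOdd QD) m 0 : CliffordAlgebra QD)
    with hm0
  set m1 : CliffordAlgebra QD := (DirectSum.decompose (evenOdd QD) m 1 : CliffordAlgebra QD)
    with hm1
  have hm0mem : m0 ∈ evenOdd QD 0 := SetLike.coe_mem _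
  have hm1mem : m1 ∈ evenOdd QD 1 := SetLike.coe_mem _
  have hsum : m = m0 + m1 := hdec m
  obtain ⟨g1, g2⟩ := heven m0 hm0mem
  obtain ⟨g3, g4⟩ := hodd m1 hm1mem
  constructor
  · constructor
    · intro hm
      exact heven m hm
    · rintro ⟨h1, h2⟩
      have hφm : φ m = φ m0 + φ m1 := by rw [hsum, map_add]
      have e1 : φ m1 0 1 = 0 := by
        have := congrArg (fun M => M 0 1) hφm
        simp only [Matrix.add_apply] at this
        rw [h1, g1, zero_add] at this
        exact this.symm
      have e2 : φ m1 1 0 = 0 := by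
        have := congrArg (fun M => M 1 0) hφm
        simp only [Matrix.add_apply] at this
        rw [h2, g2, zero_add] at this
        exact this.symm
      have hz : φ m1 = 0 := by
        ext i j
        fin_cases i <;> fin_cases j <;> simp [g3, g4, e1, e2]
      have : m1 = 0 := hinj (by rw [hz, map_zero])
      rw [hsum, this, add_zero]
      exact hm0mem
  · constructor
    · intro hm
      exact hodd m hm
    · rintro ⟨h1, h2⟩
      have hφm : φ m = φ m0 + φ m1 := by rw [hsum, map_add]
      have e1 : φ m0 0 0 = 0 := by
        have := congrArg (fun M => M 0 0) hφm
        simp only [Matrix.add_apply] at this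
        rw [h1, g3, add_zero] at this
        exact this.symm
      have e2 : φ m0 1 1 = 0 := by
        have := congrArg (fun M => M 1 1) hφm
        simp only [Matrix.add_apply] at this
        rw [h2, g4, add_zero] at this
        exact this.symm
      have hz : φ m0 = 0 := by
        ext i j
        fin_cases i <;> fin_cases j <;> simp [g1, g2, e1, e2]
      have : m0 = 0 := hinj (by rw [hz, map_zero])
      rw [hsum, this, zero_add]
      exact hm1mem
end

section
/- Let F be a field in which ℓ is invertible, where ℓ ∈ {1,2,3} is attached to an irreducible root system R, and let (𝐭, Q_𝐓) be the F-quadratic space obtained from the normalized W-invariant form Q_𝕋 on X_*(𝕋) (which takes value ℓ(α∨) on each coroot α∨). Then the composite W → O(Q_𝐓)(F) → F^×/(F^×)² of the natural Weyl action with the spinor norm sends w to the square class of 1 if ε''(w) = 1 and of ℓ if ε''(w) = −1; i.e., it equals ε'' ⊗ ℓ. -/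
open QuadraticMap CliffordAlgebra

namespace Stmt13Aux

theorem zmod2_em (d : ZMod 2) : d = 0 ∨ d = 1 := by revert d; decide

section ring
variable {R : Type*} [Ring R]

theorem sigma_mul_self (d : ZMod 2) : ((-1 : R) ^ d.val) * ((-1 : R) ^ d.val) = 1 := by
  rcases zmod2_em d with rfl | rfl <;>
    norm_num [show ((0 : ZMod 2)).val = 0 from rfl, show ((1 : ZMod 2)).val = 1 from rfl,
      show ((2 : ZMod 2)).val = 0 from rfl]

theorem sigma_add (d₁ d₂ : ZMod 2) :
    ((-1 : R) ^ (d₁ + d₂).val) = ((-1 : R) ^ d₁.val) * ((-1 : R) ^ d₂.val) := by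
  rcases zmod2_em d₁ with rfl | rfl <;> rcases zmod2_em d₂ with rfl | rfl <;>
    norm_num [show ((1 : ZMod 2) + 1) = 0 from rfl, show ((0 : ZMod 2) + 1) = 1 from rfl,
      show ((1 : ZMod 2) + 0) = 1 from rfl, show ((0 : ZMod 2) + 0) = 0 from rfl,
      show ((0 : ZMod 2)).val = 0 from rfl, show ((1 : ZMod 2)).val = 1 from rfl,
      show ((2 : ZMod 2)).val = 0 from rfl]

theorem sigma_comm {R : Type*} [Ring R] (d : ZMod 2) (t : R) :
    ((-1 : R) ^ d.val) * t = t * ((-1 : R) ^ d.val) := by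
  rcases zmod2_em d with rfl | rfl
  · rw [show ((0 : ZMod 2)).val = 0 from rfl, pow_zero, one_mul, mul_one]
  · rw [show ((1 : ZMod 2)).val = 1 from rfl, pow_one, neg_one_mul, mul_neg_one]

theorem sigma_conj {R : Type*} [Ring R] (d : ZMod 2) (a t b : R) :
    a * (((-1 : R) ^ d.val) * t) * b = ((-1 : R) ^ d.val) * (a * t * b) := by
  rw [← mul_assoc, ← sigma_comm, mul_assoc, mul_assoc, mul_assoc]


end ring

section classes
variable {F : Type*} [Field F] (ℓ : F) (hℓ : ℓ ≠ 0)

/-- square class representative attached to a sign -/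
noncomputable def L (u : ℤˣ) : F := if u = 1 then 1 else ℓ

include hℓ in
theorem L_ne_zero (u : ℤˣ) : L ℓ u ≠ 0 := by
  unfold L; split
  · exact one_ne_zero
  · exact hℓ

include hℓ in
theorem class_mul {s₁ s₂ : F} (h₁ : s₁ ≠ 0) (h₂ : s₂ ≠ 0) (u₁ u₂ : ℤˣ) :
    ∃ s : F, s ≠ 0 ∧ (s₁ ^ 2 * L ℓ u₁) * (s₂ ^ 2 * L ℓ u₂) = s ^ 2 * L ℓ (u₁ * u₂) := by
  rcases Int.units_eq_one_or u₁ with rfl | rfl <;>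
    rcases Int.units_eq_one_or u₂ with rfl | rfl <;>
    unfold L <;>
    norm_num
  · exact ⟨s₁ * s₂, mul_ne_zero h₁ h₂, by ring⟩
  · exact ⟨s₁ * s₂, mul_ne_zero h₁ h₂, by ring⟩
  · exact ⟨s₁ * s₂, mul_ne_zero h₁ h₂, by ring⟩
  · exact ⟨s₁ * s₂ * ℓ, mul_ne_zero (mul_ne_zero h₁ h₂) hℓ, by ring⟩

include hℓ in
theorem class_inv {s : F} (h : s ≠ 0) (u : ℤˣ) :
    ∃ s' : F, s' ≠ 0 ∧ (s ^ 2 * L ℓ u)⁻¹ = s' ^ 2 * L ℓ u := by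
  rcases Int.units_eq_one_or u with rfl | rfl <;> unfold L <;> norm_num
  · exact ⟨s⁻¹, inv_ne_zero h, by rw [inv_pow]⟩
  · exact ⟨s⁻¹ * ℓ⁻¹, mul_ne_zero (inv_ne_zero h) (inv_ne_zero hℓ), by
      field_simp⟩

end classes


variable {F : Type*} [Field F] {V : Type*} [AddCommGroup V] [Module F V]
variable {Q : QuadraticForm F V}

local infixl:70 "⌋" => CliffordAlgebra.contractLeft

/-- Twisted Leibniz rule for left contraction. -/
theorem contract_mul (f : Module.Dual F V) (x : CliffordAlgebra Q) :
    ∀ y : CliffordAlgebra Q, f⌋(x * y) = (f⌋x) * y + involute x * (f⌋y) := by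
  induction x using CliffordAlgebra.induction with
  | algebraMap r =>
    intro y
    simp [contractLeft_algebraMap_mul, contractLeft_algebraMap, AlgHom.commutes]
  | ι m =>
    intro y
    rw [contractLeft_ι_mul, contractLeft_ι, involute_ι, Algebra.smul_def, neg_mul,
      sub_eq_add_neg]
  | mul a b ha hb =>
    intro y
    rw [mul_assoc, ha, hb, ha b, map_mul]
    noncomm_ring
  | add a b ha hb =>
    intro y
    simp only [add_mul, map_add, ha y, hb y]
    abel

/-- The graded commutator of `ι Q v` with anything is a contraction. -/
theorem ι_mul_eq (v : V) (x : CliffordAlgebra Q) :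
    ι Q v * x = involute x * ι Q v + (polarBilin Q v)⌋x := by
  induction x using CliffordAlgebra.induction with
  | algebraMap r =>
    rw [contractLeft_algebraMap, AlgHom.commutes, add_zero, Algebra.commutes]
  | ι m =>
    have h := ι_mul_ι_add_swap (Q := Q) v m
    rw [involute_ι, contractLeft_ι, polarBilin_apply_apply, neg_mul, ← h]
    abel
  | mul a b ha hb =>
    rw [← mul_assoc, ha, add_mul, mul_assoc, hb, contract_mul, map_mul]
    noncomm_ring
  | add a b ha hb =>
    simp only [mul_add, add_mul, map_add, ha, hb]
    abel

theorem mul_ι_eq (v : V) (x : CliffordAlgebra Q) :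
    x * ι Q v = ι Q v * involute x - (polarBilin Q v)⌋(involute x) := by
  have h := ι_mul_eq (Q := Q) v (involute x)
  rw [involute_involute] at h
  rw [h]; abel


variable (Q) in
/-- The subalgebra generated by `ι Q` of a set of vectors. -/
noncomputable def A (s : Set V) : Subalgebra F (CliffordAlgebra Q) :=
  Algebra.adjoin F (ι Q '' s)

theorem invol_mem {s : Set V} {x : CliffordAlgebra Q} (hx : x ∈ A Q s) :
    involute x ∈ A Q s := by
  induction hx using Algebra.adjoin_induction with
  | mem g hg =>
    obtain ⟨v, hv, rfl⟩ := hg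
    rw [involute_ι]
    exact neg_mem (Algebra.subset_adjoin ⟨v, hv, rfl⟩)
  | algebraMap r => rw [AlgHom.commutes]; exact algebraMap_mem _ r
  | add a b _ _ ha hb => rw [map_add]; exact add_mem ha hb
  | mul a b _ _ ha hb => rw [map_mul]; exact mul_mem ha hb

theorem contract_mem {s : Set V} {x : CliffordAlgebra Q} (hx : x ∈ A Q s)
    (f : Module.Dual F V) : f⌋x ∈ A Q s := by
  induction hx using Algebra.adjoin_induction with
  | mem g hg =>
    obtain ⟨v, hv, rfl⟩ := hg
    rw [contractLeft_ι]
    exact algebraMap_mem _ _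
  | algebraMap r => rw [contractLeft_algebraMap]; exact zero_mem _
  | add a b _ _ ha hb => rw [map_add]; exact add_mem ha hb
  | mul a b ha' hb' ha hb =>
    rw [contract_mul]
    exact add_mem (mul_mem ha hb') (mul_mem (invol_mem ha') hb)

theorem contract_eq_zero {s : Set V} {x : CliffordAlgebra Q} (hx : x ∈ A Q s)
    {f : Module.Dual F V} (hf : ∀ v ∈ s, f v = 0) : f⌋x = 0 := by
  induction hx using Algebra.adjoin_induction with
  | mem g hg =>
    obtain ⟨v, hv, rfl⟩ := hg
    rw [contractLeft_ι, hf v hv, map_zero]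
  | algebraMap r => rw [contractLeft_algebraMap]
  | add a b _ _ ha hb => rw [map_add, ha, hb, add_zero]
  | mul a b ha' hb' ha hb => rw [contract_mul, ha, hb, zero_mul, mul_zero, add_zero]

theorem decomp {s : Set V} (v : V) {x : CliffordAlgebra Q}
    (hx : x ∈ A Q (insert v s)) :
    ∃ a b, a ∈ A Q s ∧ b ∈ A Q s ∧ x = a + ι Q v * b := by
  -- moving `ι Q v` across elements of `A Q s`
  have move : ∀ y ∈ A Q s, ∃ y' y'', y' ∈ A Q s ∧ y'' ∈ A Q s ∧
      y * ι Q v = ι Q v * y' + y'' := by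
    intro y hy
    exact ⟨involute y, -((polarBilin Q v)⌋(involute y)), invol_mem hy,
      neg_mem (contract_mem (invol_mem hy) _), by rw [mul_ι_eq]; abel⟩
  induction hx using Algebra.adjoin_induction with
  | mem g hg =>
    obtain ⟨u, hu, rfl⟩ := hg
    rcases hu with rfl | hu
    · exact ⟨0, 1, zero_mem _, one_mem _, by rw [mul_one, zero_add]⟩
    · exact ⟨ι Q u, 0, Algebra.subset_adjoin ⟨u, hu, rfl⟩, zero_mem _, by
        rw [mul_zero, add_zero]⟩
  | algebraMap r =>
    exact ⟨algebraMap F _ r, 0, algebraMap_mem _ r, zero_mem _, by rw [mul_zero, add_zero]⟩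
  | add x y _ _ hx hy =>
    obtain ⟨a₁, b₁, ha₁, hb₁, rfl⟩ := hx
    obtain ⟨a₂, b₂, ha₂, hb₂, rfl⟩ := hy
    exact ⟨a₁ + a₂, b₁ + b₂, add_mem ha₁ ha₂, add_mem hb₁ hb₂, by
      rw [mul_add]; abel⟩
  | mul x y _ _ hx hy =>
    obtain ⟨a₁, b₁, ha₁, hb₁, rfl⟩ := hx
    obtain ⟨a₂, b₂, ha₂, hb₂, rfl⟩ := hy
    obtain ⟨a₁', a₁'', ha₁', ha₁'', hmova⟩ := move a₁ ha₁
    obtain ⟨b₁', b₁'', hb₁', hb₁'', hmovb⟩ := move b₁ hb₁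
    refine ⟨a₁ * a₂ + a₁'' * b₂ + (algebraMap F _ (Q v)) * (b₁' * b₂),
      a₁' * b₂ + b₁ * a₂ + b₁'' * b₂, ?_, ?_, ?_⟩
    · exact add_mem (add_mem (mul_mem ha₁ ha₂) (mul_mem ha₁'' hb₂))
        (mul_mem (algebraMap_mem _ _) (mul_mem hb₁' hb₂))
    · exact add_mem (add_mem (mul_mem ha₁' hb₂) (mul_mem hb₁ ha₂)) (mul_mem hb₁'' hb₂)
    · have e1 : a₁ * (ι Q v * b₂) = ι Q v * (a₁' * b₂) + a₁'' * b₂ := by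
        rw [← mul_assoc, hmova]; noncomm_ring
      have e2 : (ι Q v * b₁) * (ι Q v * b₂)
          = algebraMap F _ (Q v) * (b₁' * b₂) + ι Q v * (b₁'' * b₂) := by
        calc (ι Q v * b₁) * (ι Q v * b₂) = ι Q v * ((b₁ * ι Q v) * b₂) := by noncomm_ring
        _ = ι Q v * ((ι Q v * b₁' + b₁'') * b₂) := by rw [hmovb]
        _ = (ι Q v * ι Q v) * (b₁' * b₂) + ι Q v * (b₁'' * b₂) := by noncomm_ring
        _ = _ := by rw [ι_sq_scalar]
      calc (a₁ + ι Q v * b₁) * (a₂ + ι Q v * b₂)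
          = a₁ * a₂ + a₁ * (ι Q v * b₂) + (ι Q v * b₁) * a₂ + (ι Q v * b₁) * (ι Q v * b₂) := by
            noncomm_ring
        _ = _ := by rw [e1, e2]; noncomm_ring


section findim
variable [FiniteDimensional F V]

theorem kill_scalar (z : CliffordAlgebra Q) (hz : ∀ f : Module.Dual F V, f⌋z = 0) :
    ∃ t : F, z = algebraMap F _ t := by
  set n := Module.finrank F V with hn
  let e : Module.Basis (Fin n) F V := Module.finBasis F V
  -- every element lies in the subalgebra generated by the basis vectors
  have htop : ∀ x : CliffordAlgebra Q, x ∈ A Q (Set.range e) := by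
    intro x
    induction x using CliffordAlgebra.induction with
    | algebraMap r => exact algebraMap_mem _ r
    | ι v =>
      rw [← e.sum_repr v, map_sum]
      refine sum_mem fun j _ => ?_
      rw [_root_.map_smul]
      have hmem : ι Q (e j) ∈ A Q (Set.range ⇑e) :=
        Algebra.subset_adjoin (Set.mem_image_of_mem _ (Set.mem_range_self j))
      exact Submodule.smul_mem (Subalgebra.toSubmodule (A Q (Set.range ⇑e))) _ hmem
    | add a b ha hb => exact add_mem ha hb
    | mul a b ha hb => exact mul_mem ha hb
  -- induction over finsets of indices
  have key : ∀ (s : Finset (Fin n)) (z : CliffordAlgebra Q), z ∈ A Q (e '' ↑s) →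
      (∀ f : Module.Dual F V, f⌋z = 0) → ∃ t : F, z = algebraMap F _ t := by
    intro s
    induction s using Finset.induction with
    | empty =>
      intro z hzmem _
      rw [Finset.coe_empty, Set.image_empty] at hzmem
      simp only [A, Set.image_empty, Algebra.adjoin_empty, Algebra.mem_bot, Set.mem_range]
        at hzmem
      obtain ⟨t, ht⟩ := hzmem
      exact ⟨t, ht.symm⟩
    | @insert k s hk ih =>
      intro z hzmem hzc
      rw [Finset.coe_insert, Set.image_insert_eq] at hzmem
      obtain ⟨a, b, ha, hb, rfl⟩ := decomp (e k) hzmem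
      have hcoord : ∀ v ∈ e '' ↑s, e.coord k v = 0 := by
        rintro _ ⟨j, hj, rfl⟩
        have hjk : j ≠ k := fun h => hk (h ▸ hj)
        rw [Module.Basis.coord_apply, e.repr_self_apply]
        simp [hjk]
      have hb0 : b = 0 := by
        have h1 := hzc (e.coord k)
        rw [map_add, contract_eq_zero ha hcoord, contractLeft_ι_mul,
          contract_eq_zero hb hcoord, Module.Basis.coord_apply, e.repr_self_apply] at h1
        simpa using h1
      subst hb0
      rw [mul_zero, add_zero] at hzc ⊢
      exact ih a ha hzc
  have := key Finset.univ z ?_ hz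
  · exact this
  · have : e '' ↑(Finset.univ : Finset (Fin n)) = Set.range e := by
      rw [Finset.coe_univ, Set.image_univ]
    rw [this]
    exact htop z

theorem central_scalar (hnd : ∀ x : V, (∀ y : V, polar Q x y = 0) → x = 0)
    (z : CliffordAlgebra Q) (hcomm : ∀ y : V, ι Q y * z = involute z * ι Q y) :
    ∃ t : F, z = algebraMap F _ t := by
  apply kill_scalar
  -- polarBilin is surjective onto the dual
  have hinj : Function.Injective (polarBilin Q) := by
    rw [injective_iff_map_eq_zero]
    intro v hv
    exact hnd v fun y => by
      have := congrArg (fun g => g y) hv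
      simpa using this
  have hsurj : Function.Surjective (polarBilin Q) :=
    (LinearMap.injective_iff_surjective_of_finrank_eq_finrank
      Subspace.dual_finrank_eq.symm).mp hinj
  intro f
  obtain ⟨v, rfl⟩ := hsurj f
  have h := ι_mul_eq v z
  rw [hcomm v] at h
  exact (add_eq_left.mp h.symm)


end findim


theorem CA_nontrivial : Nontrivial (CliffordAlgebra Q) := by
  obtain ⟨B, hB⟩ := LinearMap.BilinMap.toQuadraticMap_surjective
    ((0 : QuadraticForm F V) - Q)
  have : Nontrivial (CliffordAlgebra (0 : QuadraticForm F V)) :=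
    inferInstanceAs (Nontrivial (ExteriorAlgebra F V))
  exact (changeFormEquiv (Q := Q) (Q' := 0) hB).symm.injective.nontrivial

theorem norm_inv {c c' : CliffordAlgebra Q} {a : F} (ha : a ≠ 0)
    (h1 : c * c' = 1) (hn : reverse (Q := Q) c * c = algebraMap F _ a) :
    reverse (Q := Q) c' * c' = algebraMap F _ a⁻¹ := by
  have hrc : reverse (Q := Q) c = algebraMap F _ a * c' := by
    calc reverse (Q := Q) c = reverse (Q := Q) c * (c * c') := by rw [h1, mul_one]
    _ = (reverse (Q := Q) c * c) * c' := by rw [mul_assoc]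
    _ = _ := by rw [hn]
  have h2 : reverse (Q := Q) c' * reverse (Q := Q) c = 1 := by
    rw [← reverse.map_mul, h1, reverse.map_one]
  have h3 : algebraMap F (CliffordAlgebra Q) a * (reverse (Q := Q) c' * c') = 1 := by
    calc algebraMap F (CliffordAlgebra Q) a * (reverse (Q := Q) c' * c')
        = reverse (Q := Q) c' * (algebraMap F _ a * c') := by
          rw [← mul_assoc, ← mul_assoc, Algebra.commutes]
      _ = 1 := by rw [← hrc, h2]
  calc reverse (Q := Q) c' * c'
      = (algebraMap F (CliffordAlgebra Q) a⁻¹ * algebraMap F _ a) * (reverse (Q := Q) c' * c') := by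
        rw [← map_mul, inv_mul_cancel₀ ha, map_one, one_mul]
    _ = algebraMap F _ a⁻¹ * (algebraMap F _ a * (reverse (Q := Q) c' * c')) := by
        rw [mul_assoc]
    _ = _ := by rw [h3, mul_one]

theorem involute_of_mem {z : CliffordAlgebra Q} {p : ZMod 2} (hz : z ∈ evenOdd Q p) :
    involute z = ((-1 : CliffordAlgebra Q) ^ p.val) * z := by
  rcases zmod2_em p with rfl | rfl
  · rw [involute_eq_of_mem_even hz, show ((0 : ZMod 2)).val = 0 from rfl, pow_zero, one_mul]
  · rw [involute_eq_of_mem_odd hz, show ((1 : ZMod 2)).val = 1 from rfl, pow_one, neg_one_mul]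



end Stmt13Aux


open Stmt13Aux in
/-- Let `F` be a field in which `ℓ` is invertible, where `ℓ ∈ {1,2,3}` is
attached to an irreducible root system `R`, and let `(𝐭, Q)` be the `F`-quadratic space
obtained from the normalized invariant form `Q_𝕋` on `X_*(𝕋)`, so that `Q(H_α) = ℓ(α∨) ∈
{1, ℓ}` on coroots, `Q(H_α) = 1` exactly when `α` is long.  Let `W` be the Weyl group, i.e.
the subgroup of `O(Q)(F)` generated by the reflections `r_{H_α}`, and `ε'' : W → {±1}` the
character with `ε''(r_{H_α}) = 1` iff `α` is long.  Then the spinor norm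
`W → O(Q)(F) → F^×/(F^×)²` sends `w` to the square class of `1` if `ε''(w) = 1` and of `ℓ`
if `ε''(w) = −1`; i.e. it equals `ε'' ⊗ ℓ`.  The spinor norm of `w` is computed as
`N(c) = reverse c * c` for any lift `c` of `w` to the Clifford group. -/
theorem stmt13 {F : Type*} [Field F] {I : Type*} [Fintype I]
    {V : Type*} [AddCommGroup V] [Module F V] [FiniteDimensional F V]
    (ℓ : ℕ) (hℓ : ℓ = 1 ∨ ℓ = 2 ∨ ℓ = 3) (hinv : (ℓ : F) ≠ 0)
    (Q : QuadraticForm F V)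
    (hnd : ∀ x : V, (∀ y : V, polar Q x y = 0) → x = 0)
    -- the coroots `H_α` and the predicate "`α` is long"
    (H : I → V) (isLong : I → Bool)
    (hH : ∀ i, Q (H i) = if isLong i then 1 else (ℓ : F))
    -- the reflections `r_{H_α}` and the Weyl group they generate
    (r : I → (V ≃ₗ[F] V))
    (hr : ∀ i x, r i x = x - (polar Q (H i) x / Q (H i)) • H i)
    (W : Subgroup (V ≃ₗ[F] V)) (hW : W = Subgroup.closure (Set.range r))
    -- the sign character `ε''`
    (ε'' : W →* ℤˣ)
    (hε'' : ∀ i (hi : r i ∈ W), ε'' ⟨r i, hi⟩ = if isLong i then 1 else -1) :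
    -- conclusion: any Clifford-group lift `c` of any `w ∈ W` has norm `reverse c * c` in the
    -- square class of `1` resp. `ℓ`, according to `ε'' w`
    ∀ (w : W) (c c' : CliffordAlgebra Q) (d : ZMod 2),
      c * c' = 1 → c' * c = 1 → c ∈ evenOdd Q d →
      (∀ y : V, ((-1 : CliffordAlgebra Q) ^ d.val) * (c * ι Q y * c') = ι Q ((w : V ≃ₗ[F] V) y)) →
      ∃ s : F, s ≠ 0 ∧
        reverse (Q := Q) c * c =
          algebraMap F _ (s ^ 2 * (if ε'' w = 1 then 1 else (ℓ : F))) := by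
  subst hW
  haveI : Nontrivial (CliffordAlgebra Q) := CA_nontrivial
  intro w c c' d hcc' hc'c hmem hconj
  have hLgoal : (if ε'' w = 1 then (1 : F) else (ℓ : F)) = L (ℓ : F) (ε'' w) := rfl
  have hconj' : ∀ y : V, c * ι Q y * c' =
      ((-1 : CliffordAlgebra Q) ^ d.val) * ι Q ((w : V ≃ₗ[F] V) y) := by
    intro y
    calc c * ι Q y * c'
        = ((-1 : CliffordAlgebra Q) ^ d.val * (-1) ^ d.val) * (c * ι Q y * c') := by
          rw [sigma_mul_self, one_mul]
      _ = (-1 : CliffordAlgebra Q) ^ d.val *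
          ((-1 : CliffordAlgebra Q) ^ d.val * (c * ι Q y * c')) := by rw [mul_assoc]
      _ = _ := by rw [hconj y]
  clear hconj
  -- Step 1: construct explicit lifts for all elements of the Weyl group
  have key : ∀ (g : V ≃ₗ[F] V) (hg : g ∈ Subgroup.closure (Set.range r)),
      ∃ (cw cw' : CliffordAlgebra Q) (dw : ZMod 2) (s : F), s ≠ 0 ∧
        cw * cw' = 1 ∧ cw' * cw = 1 ∧ cw ∈ evenOdd Q dw ∧ cw' ∈ evenOdd Q dw ∧
        (∀ y : V, cw * ι Q y * cw' = ((-1 : CliffordAlgebra Q) ^ dw.val) * ι Q (g y)) ∧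
        reverse (Q := Q) cw * cw = algebraMap F _ (s ^ 2 * L (ℓ : F) (ε'' ⟨g, hg⟩)) := by
    intro g hg
    induction hg using Subgroup.closure_induction with
    | mem x hx =>
      obtain ⟨i, rfl⟩ := hx
      have hQH : Q (H i) ≠ 0 := by
        rw [hH i]; cases hb : isLong i <;> simp [hinv]
      refine ⟨ι Q (H i), (Q (H i))⁻¹ • ι Q (H i), 1, 1, one_ne_zero, ?_, ?_, ?_, ?_, ?_, ?_⟩
      · rw [mul_smul_comm, ι_sq_scalar, Algebra.smul_def, ← map_mul,
          inv_mul_cancel₀ hQH, map_one]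
      · rw [smul_mul_assoc, ι_sq_scalar, Algebra.smul_def, ← map_mul,
          inv_mul_cancel₀ hQH, map_one]
      · exact ι_mem_evenOdd_one Q (H i)
      · exact Submodule.smul_mem _ _ (ι_mem_evenOdd_one Q (H i))
      · intro y
        have expand : ι Q (H i) * ι Q y * ι Q (H i)
            = polar Q (H i) y • ι Q (H i) - Q (H i) • ι Q y := by
          calc ι Q (H i) * ι Q y * ι Q (H i)
              = (algebraMap F _ (polar Q (H i) y) - ι Q y * ι Q (H i)) * ι Q (H i) := by
                rw [ι_mul_ι_comm]
            _ = algebraMap F _ (polar Q (H i) y) * ι Q (H i)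
                - ι Q y * (ι Q (H i) * ι Q (H i)) := by noncomm_ring
            _ = polar Q (H i) y • ι Q (H i) - Q (H i) • ι Q y := by
                rw [ι_sq_scalar, ← Algebra.commutes, Algebra.smul_def, Algebra.smul_def]
        rw [show ((1 : ZMod 2)).val = 1 from rfl, pow_one, hr i y]
        calc ι Q (H i) * ι Q y * ((Q (H i))⁻¹ • ι Q (H i))
            = (Q (H i))⁻¹ • (ι Q (H i) * ι Q y * ι Q (H i)) := by rw [mul_smul_comm]
          _ = (Q (H i))⁻¹ • (polar Q (H i) y • ι Q (H i) - Q (H i) • ι Q y) := by rw [expand]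
          _ = (polar Q (H i) y / Q (H i)) • ι Q (H i) - ι Q y := by
              rw [smul_sub, smul_smul, smul_smul, inv_mul_cancel₀ hQH, one_smul,
                div_eq_inv_mul]
          _ = -1 * ι Q (y - (polar Q (H i) y / Q (H i)) • H i) := by
              rw [_root_.map_sub, _root_.map_smul, neg_one_mul, neg_sub]
      · rw [reverse_ι, ι_sq_scalar, hε'' i (Subgroup.subset_closure ⟨i, rfl⟩), hH i]
        cases hb : isLong i <;> simp [L]
    | one =>
      refine ⟨1, 1, 0, 1, one_ne_zero, mul_one 1, mul_one 1, ?_, ?_, ?_, ?_⟩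
      · exact SetLike.one_mem_graded _
      · exact SetLike.one_mem_graded _
      · intro y
        rw [show ((0 : ZMod 2)).val = 0 from rfl, pow_zero, one_mul, one_mul, mul_one]
        rfl
      · have h1 : (⟨(1 : V ≃ₗ[F] V), Subgroup.one_mem _⟩ :
            Subgroup.closure (Set.range r)) = 1 := rfl
        rw [h1, _root_.map_one ε'', reverse.map_one, mul_one]
        simp [L]
    | mul x y hx hy px py =>
      obtain ⟨c₁, c₁', d₁, s₁, hs₁, h₁, h₁', hm₁, hm₁', hcj₁, hn₁⟩ := px
      obtain ⟨c₂, c₂', d₂, s₂, hs₂, h₂, h₂', hm₂, hm₂', hcj₂, hn₂⟩ := py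
      obtain ⟨s, hs, hclass⟩ := class_mul (ℓ : F) hinv hs₁ hs₂ (ε'' ⟨x, hx⟩) (ε'' ⟨y, hy⟩)
      refine ⟨c₁ * c₂, c₂' * c₁', d₁ + d₂, s, hs, ?_, ?_, ?_, ?_, ?_, ?_⟩
      · calc c₁ * c₂ * (c₂' * c₁') = c₁ * (c₂ * c₂') * c₁' := by noncomm_ring
          _ = 1 := by rw [h₂, mul_one, h₁]
      · calc c₂' * c₁' * (c₁ * c₂) = c₂' * (c₁' * c₁) * c₂ := by noncomm_ring
          _ = 1 := by rw [h₁', mul_one, h₂']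
      · exact SetLike.mul_mem_graded hm₁ hm₂
      · rw [add_comm d₁ d₂]; exact SetLike.mul_mem_graded hm₂' hm₁'
      · intro z
        calc c₁ * c₂ * ι Q z * (c₂' * c₁')
            = c₁ * (c₂ * ι Q z * c₂') * c₁' := by noncomm_ring
          _ = c₁ * (((-1 : CliffordAlgebra Q) ^ d₂.val) * ι Q (y z)) * c₁' := by rw [hcj₂ z]
          _ = ((-1 : CliffordAlgebra Q) ^ d₂.val) * (c₁ * ι Q (y z) * c₁') := by
              rw [sigma_conj]
          _ = ((-1 : CliffordAlgebra Q) ^ d₂.val) *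
              (((-1 : CliffordAlgebra Q) ^ d₁.val) * ι Q (x (y z))) := by rw [hcj₁ (y z)]
          _ = ((-1 : CliffordAlgebra Q) ^ (d₁ + d₂).val) * ι Q ((x * y) z) := by
              rw [sigma_add, show (x * y) z = x (y z) from rfl, ← mul_assoc,
                sigma_comm d₂ ((-1 : CliffordAlgebra Q) ^ d₁.val)]
      · have heq : ε'' ⟨x * y, mul_mem hx hy⟩ = ε'' ⟨x, hx⟩ * ε'' ⟨y, hy⟩ := by
          rw [← _root_.map_mul ε'']; rfl
        rw [heq]
        calc reverse (Q := Q) (c₁ * c₂) * (c₁ * c₂)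
            = reverse (Q := Q) c₂ * (reverse (Q := Q) c₁ * c₁) * c₂ := by
              rw [reverse.map_mul]; noncomm_ring
          _ = reverse (Q := Q) c₂ * algebraMap F _ (s₁ ^ 2 * L (ℓ : F) (ε'' ⟨x, hx⟩)) * c₂ := by
              rw [hn₁]
          _ = algebraMap F _ (s₁ ^ 2 * L (ℓ : F) (ε'' ⟨x, hx⟩)) *
              (reverse (Q := Q) c₂ * c₂) := by rw [← Algebra.commutes, mul_assoc]
          _ = _ := by rw [hn₂, ← map_mul, hclass]
    | inv x hx px =>
      obtain ⟨c₁, c₁', d₁, s₁, hs₁, h₁, h₁', hm₁, hm₁', hcj₁, hn₁⟩ := px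
      have ha : s₁ ^ 2 * L (ℓ : F) (ε'' ⟨x, hx⟩) ≠ 0 :=
        mul_ne_zero (pow_ne_zero _ hs₁) (L_ne_zero (ℓ : F) hinv _)
      obtain ⟨s', hs', hclass⟩ := class_inv (ℓ : F) hinv hs₁ (ε'' ⟨x, hx⟩)
      refine ⟨c₁', c₁, d₁, s', hs', h₁', h₁, hm₁', hm₁, ?_, ?_⟩
      · intro y
        have step : c₁ * ι Q (x⁻¹ y) * c₁'
            = ((-1 : CliffordAlgebra Q) ^ d₁.val) * ι Q y := by
          rw [hcj₁ (x⁻¹ y), show x (x⁻¹ y) = y from x.apply_symm_apply y]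
        calc c₁' * ι Q y * c₁
            = c₁' * (((-1 : CliffordAlgebra Q) ^ d₁.val * (-1) ^ d₁.val)
              * ι Q y) * c₁ := by rw [sigma_mul_self, one_mul]
          _ = ((-1 : CliffordAlgebra Q) ^ d₁.val)
              * (c₁' * (((-1 : CliffordAlgebra Q) ^ d₁.val) * ι Q y) * c₁) := by
              rw [mul_assoc ((-1 : CliffordAlgebra Q) ^ d₁.val), sigma_conj]
          _ = ((-1 : CliffordAlgebra Q) ^ d₁.val)
              * (c₁' * (c₁ * ι Q (x⁻¹ y) * c₁') * c₁) := by rw [step]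
          _ = ((-1 : CliffordAlgebra Q) ^ d₁.val)
              * ((c₁' * c₁) * ι Q (x⁻¹ y) * (c₁' * c₁)) := by noncomm_ring
          _ = ((-1 : CliffordAlgebra Q) ^ d₁.val) * ι Q (x⁻¹ y) := by
              rw [h₁', one_mul, mul_one]
      · have hinveq : ε'' ⟨x⁻¹, inv_mem hx⟩ = ε'' ⟨x, hx⟩ := by
          have h0 : (⟨x⁻¹, inv_mem hx⟩ : Subgroup.closure (Set.range r)) = (⟨x, hx⟩)⁻¹ := rfl
          rw [h0, map_inv]
          rcases Int.units_eq_one_or (ε'' ⟨x, hx⟩) with h | h <;> rw [h] <;> decide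
        rw [hinveq, ← hclass]
        exact norm_inv ha h₁ hn₁
  -- Step 2: compare the given lift with the constructed one
  obtain ⟨cw, cw', dw, s, hs, h1, h2, hmw, hmw', hcjw, hnw⟩ := key (w : V ≃ₗ[F] V) w.2
  have ha : s ^ 2 * L (ℓ : F) (ε'' w) ≠ 0 :=
    mul_ne_zero (pow_ne_zero _ hs) (L_ne_zero (ℓ : F) hinv _)
  have hnw' : reverse (Q := Q) cw * cw = algebraMap F _ (s ^ 2 * L (ℓ : F) (ε'' w)) := hnw
  set z := cw' * c with hzdef
  set z' := c' * cw with hz'def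
  have hzz' : z * z' = 1 := by
    calc cw' * c * (c' * cw) = cw' * (c * c') * cw := by noncomm_ring
      _ = 1 := by rw [hcc', mul_one, h2]
  have hz'z : z' * z = 1 := by
    calc c' * cw * (cw' * c) = c' * (cw * cw') * c := by noncomm_ring
      _ = 1 := by rw [h1, mul_one, hc'c]
  have hzmem : z ∈ evenOdd Q (dw + d) := SetLike.mul_mem_graded hmw' hmem
  have hstep : ∀ u : V, cw' * ι Q u * cw
      = ((-1 : CliffordAlgebra Q) ^ dw.val) * ι Q ((w : V ≃ₗ[F] V).symm u) := by
    intro u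
    have h3 := hcjw ((w : V ≃ₗ[F] V).symm u)
    rw [LinearEquiv.apply_symm_apply] at h3
    calc cw' * ι Q u * cw
        = cw' * (((-1 : CliffordAlgebra Q) ^ dw.val * (-1) ^ dw.val) * ι Q u) * cw := by
          rw [sigma_mul_self, one_mul]
      _ = ((-1 : CliffordAlgebra Q) ^ dw.val)
          * (cw' * (((-1 : CliffordAlgebra Q) ^ dw.val) * ι Q u) * cw) := by
          rw [mul_assoc ((-1 : CliffordAlgebra Q) ^ dw.val), sigma_conj]
      _ = ((-1 : CliffordAlgebra Q) ^ dw.val)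
          * (cw' * (cw * ι Q ((w : V ≃ₗ[F] V).symm u) * cw') * cw) := by rw [h3]
      _ = ((-1 : CliffordAlgebra Q) ^ dw.val)
          * ((cw' * cw) * ι Q ((w : V ≃ₗ[F] V).symm u) * (cw' * cw)) := by noncomm_ring
      _ = _ := by rw [h2, one_mul, mul_one]
  have hcomm : ∀ y : V, ι Q y * z = involute z * ι Q y := by
    intro y
    have hzy : z * ι Q y * z'
        = (((-1 : CliffordAlgebra Q) ^ dw.val) * ((-1 : CliffordAlgebra Q) ^ d.val))
          * ι Q y := by
      calc cw' * c * ι Q y * (c' * cw)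
          = cw' * (c * ι Q y * c') * cw := by noncomm_ring
        _ = cw' * (((-1 : CliffordAlgebra Q) ^ d.val) * ι Q ((w : V ≃ₗ[F] V) y)) * cw := by
            rw [hconj' y]
        _ = ((-1 : CliffordAlgebra Q) ^ d.val)
            * (cw' * ι Q ((w : V ≃ₗ[F] V) y) * cw) := by rw [sigma_conj]
        _ = ((-1 : CliffordAlgebra Q) ^ d.val) * (((-1 : CliffordAlgebra Q) ^ dw.val)
            * ι Q ((w : V ≃ₗ[F] V).symm ((w : V ≃ₗ[F] V) y))) := by rw [hstep]
        _ = _ := by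
            rw [LinearEquiv.symm_apply_apply, ← mul_assoc,
              sigma_comm d ((-1 : CliffordAlgebra Q) ^ dw.val)]
    have hzy2 : z * ι Q y
        = (((-1 : CliffordAlgebra Q) ^ dw.val) * ((-1 : CliffordAlgebra Q) ^ d.val))
          * (ι Q y * z) := by
      calc z * ι Q y = z * ι Q y * (z' * z) := by rw [hz'z, mul_one]
        _ = (z * ι Q y * z') * z := by noncomm_ring
        _ = _ := by rw [hzy, mul_assoc _ (ι Q y) z]
    have hσ1 : (((-1 : CliffordAlgebra Q) ^ dw.val) * ((-1 : CliffordAlgebra Q) ^ d.val))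
        * (((-1 : CliffordAlgebra Q) ^ dw.val) * ((-1 : CliffordAlgebra Q) ^ d.val)) = 1 := by
      rcases zmod2_em dw with rfl | rfl <;> rcases zmod2_em d with rfl | rfl <;>
        norm_num [show ((0 : ZMod 2)).val = 0 from rfl, show ((1 : ZMod 2)).val = 1 from rfl]
    rw [involute_of_mem hzmem, sigma_add, mul_assoc
      (((-1 : CliffordAlgebra Q) ^ dw.val) * ((-1 : CliffordAlgebra Q) ^ d.val)) z (ι Q y)]
    calc ι Q y * z
        = (((-1 : CliffordAlgebra Q) ^ dw.val) * ((-1 : CliffordAlgebra Q) ^ d.val))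
          * ((((-1 : CliffordAlgebra Q) ^ dw.val) * ((-1 : CliffordAlgebra Q) ^ d.val))
          * (ι Q y * z)) := by
          rw [← mul_assoc (((-1 : CliffordAlgebra Q) ^ dw.val) * ((-1 : CliffordAlgebra Q) ^ d.val))
            (((-1 : CliffordAlgebra Q) ^ dw.val) * ((-1 : CliffordAlgebra Q) ^ d.val))
            (ι Q y * z), hσ1, one_mul]
      _ = _ := by rw [← hzy2]
  obtain ⟨t, hzt⟩ := central_scalar hnd z hcomm
  have ht : t ≠ 0 := by
    intro h0
    rw [h0, map_zero] at hzt
    rw [hzt, zero_mul] at hzz'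
    exact zero_ne_one hzz'
  have hncw' : reverse (Q := Q) cw' * cw'
      = algebraMap F _ (s ^ 2 * L (ℓ : F) (ε'' w))⁻¹ := norm_inv ha h1 hnw'
  have hNz : reverse (Q := Q) z * z = algebraMap F _ (t * t) := by
    rw [hzt, reverse.commutes, ← map_mul]
  have hNz2 : reverse (Q := Q) z * z
      = algebraMap F _ (s ^ 2 * L (ℓ : F) (ε'' w))⁻¹ * (reverse (Q := Q) c * c) := by
    calc reverse (Q := Q) (cw' * c) * (cw' * c)
        = reverse (Q := Q) c * (reverse (Q := Q) cw' * cw') * c := by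
          rw [reverse.map_mul]; noncomm_ring
      _ = reverse (Q := Q) c * algebraMap F _ (s ^ 2 * L (ℓ : F) (ε'' w))⁻¹ * c := by
          rw [hncw']
      _ = _ := by rw [← Algebra.commutes, mul_assoc]
  refine ⟨s * t, mul_ne_zero hs ht, ?_⟩
  have hfinal : algebraMap F (CliffordAlgebra Q) ((s ^ 2 * L (ℓ : F) (ε'' w)) * (t * t))
      = reverse (Q := Q) c * c := by
    calc algebraMap F (CliffordAlgebra Q) ((s ^ 2 * L (ℓ : F) (ε'' w)) * (t * t))
        = algebraMap F _ (s ^ 2 * L (ℓ : F) (ε'' w)) * (reverse (Q := Q) z * z) := by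
          rw [hNz, map_mul]
      _ = algebraMap F _ (s ^ 2 * L (ℓ : F) (ε'' w))
          * (algebraMap F _ (s ^ 2 * L (ℓ : F) (ε'' w))⁻¹ * (reverse (Q := Q) c * c)) := by
          rw [hNz2]
      _ = _ := by
          rw [← mul_assoc, ← map_mul, mul_inv_cancel₀ ha, map_one, one_mul]
  rw [hLgoal, ← hfinal]
  congr 1
  ring
end

section
/- Let W be the dihedral group of order 12 (the Weyl group of G₂), and let ε', ε'' be the two sign characters of W whose product is the sign character ε of the reflection representation, with ε' (resp. ε'') equal to −1 on reflections in long (resp. short) roots. Then in the ring H^*(W, 𝔽₂), the total Stiefel-Whitney class (in degrees ≤ 2) of the 2-dimensional complex reflection representation of W equals 1 + ε + ε' ∪ ε'', which equals the product (1 + ε')(1 + ε'') under the multiplication (1+a+b)(1+a'+b') = 1 + (a+a') + (a∪a' + b + b'). -/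
open QuadraticMap CliffordAlgebra

namespace Stmt15Aux

open DihedralGroup
open scoped Quaternion

abbrev W := DihedralGroup 6

def idx : W → ZMod 6 | .r m => m | .sr m => m

def Bf : W → W → ZMod 2 := fun σ τ =>
  match τ with
  | .r n => if (idx σ).val + n.val < 6 then 0 else 1
  | .sr n => if (11 * (idx σ).val + n.val) % 12 = (n - idx σ).val then 0 else 1

def h₀f : W → ZMod 2
  | .r m => if m.val = 2 ∨ m.val = 3 then 1 else 0
  | .sr m => if m.val = 1 ∨ m.val = 2 ∨ m.val = 5 then 1 else 0

def E1 : W → ZMod 2 | .r m => (m.val : ZMod 2) | .sr m => (m.val : ZMod 2) + 1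
def E2 : W → ZMod 2 | .r m => (m.val : ZMod 2) | .sr m => (m.val : ZMod 2)

lemma key_decide : ∀ σ τ : W, Bf σ τ = E1 σ * E2 τ + h₀f σ + h₀f τ + h₀f (σ * τ) := by decide

lemma zmod2_ne : ∀ x y : ZMod 2, x ≠ y →
    (x.val = 0 ∧ y.val = 1) ∨ (x.val = 1 ∧ y.val = 0) := by decide

lemma neg_one_pow_central {A : Type*} [Ring A] (k : ℕ) (x : A) :
    x * (-1:A)^k = (-1:A)^k * x := by
  rcases Nat.even_or_odd k with h | h
  · rw [h.neg_one_pow, mul_one, one_mul]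
  · rw [h.neg_one_pow, mul_neg_one, neg_one_mul]

lemma zmod2_solve : ∀ p q r t u : ZMod 2, p + q + r = t + u → t = r + p + q + u := by decide

lemma zmod2_final : ∀ (Bv cup a b c x y z : ZMod 2), Bv = cup + a + b + c →
    Bv + x + y + z = cup + (a + x) + (b + y) + (c + z) := by decide

lemma neg_one_pow_mod_two {A : Type*} [Ring A] (a : ℕ) : (-1:A)^(a % 2) = (-1:A)^a := by
  conv_rhs => rw [← Nat.div_add_mod a 2]
  rw [pow_add, pow_mul, neg_one_sq, one_pow, one_mul]

lemma neg_one_pow_val_mul {A : Type*} [Ring A] (x y : ZMod 2) :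
    ((-1 : A) ^ x.val) * ((-1 : A) ^ y.val) = (-1 : A) ^ ((x + y).val) := by
  rw [← pow_add, ZMod.val_add, neg_one_pow_mod_two]

lemma neg_one_pow_self_mul {A : Type*} [Ring A] (e : ℕ) :
    ((-1 : A) ^ e) * ((-1 : A) ^ e) = 1 := by
  rw [← pow_add, ← two_mul, pow_mul, neg_one_sq, one_pow]

variable (Q : QuadraticForm ℝ (Fin 2 → ℝ))

lemma polar_eq (hQ : ∀ x, Q x = x 0 ^ 2 + x 1 ^ 2) (u x : Fin 2 → ℝ) :
    polar Q u x = 2 * (u 0 * x 0 + u 1 * x 1) := by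
  simp only [QuadraticMap.polar, hQ, Pi.add_apply]
  ring

lemma det_reflection (hQ : ∀ x, Q x = x 0 ^ 2 + x 1 ^ 2) (v : Fin 2 → ℝ) (hv : Q v ≠ 0)
    (f : (Fin 2 → ℝ) →ₗ[ℝ] (Fin 2 → ℝ))
    (hf : ∀ x, f x = x - (polar Q v x / Q v) • v) : LinearMap.det f = -1 := by
  have hQv : Q v = v 0 ^ 2 + v 1 ^ 2 := hQ v
  rw [← LinearMap.det_toMatrix (Pi.basisFun ℝ (Fin 2)), Matrix.det_fin_two]
  simp only [LinearMap.toMatrix_apply, Pi.basisFun_repr, Pi.basisFun_apply, hf,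
    polar_eq Q hQ, Pi.sub_apply, Pi.smul_apply, smul_eq_mul]
  simp [Pi.single_apply]
  rw [hQv] at hv ⊢
  field_simp
  ring

noncomputable def theIso (hQ : ∀ x, Q x = x 0 ^ 2 + x 1 ^ 2) :
    Q.IsometryEquiv (CliffordAlgebraQuaternion.Q (1:ℝ) 1) :=
  { LinearEquiv.finTwoArrow ℝ ℝ with
    map_app' := fun m => by
      simp [CliffordAlgebraQuaternion.Q_apply, hQ m, LinearEquiv.finTwoArrow_apply]
      ring }

noncomputable def φdef (hQ : ∀ x, Q x = x 0 ^ 2 + x 1 ^ 2) :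
    CliffordAlgebra Q ≃ₐ[ℝ] ℍ[ℝ,1,1] :=
  (CliffordAlgebra.equivOfIsometry (theIso Q hQ)).trans CliffordAlgebraQuaternion.equiv

lemma φ_ι (hQ : ∀ x, Q x = x 0 ^ 2 + x 1 ^ 2) (y : Fin 2 → ℝ) :
    φdef Q hQ (ι Q y) = (⟨0, y 0, y 1, 0⟩ : ℍ[ℝ,1,1]) := by
  simp [φdef, theIso, CliffordAlgebra.equivOfIsometry_apply, CliffordAlgebra.map_apply_ι]
  constructor <;> rfl

lemma central_scalar (hQ : ∀ x, Q x = x 0 ^ 2 + x 1 ^ 2) (u : CliffordAlgebra Q)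
    (h : ∀ y, u * ι Q y = ι Q y * u) : ∃ a : ℝ, u = algebraMap ℝ _ a := by
  have hi := congrArg (φdef Q hQ) (h ![1,0])
  have hj := congrArg (φdef Q hQ) (h ![0,1])
  rw [map_mul, map_mul, φ_ι] at hi hj
  simp only [Matrix.cons_val_zero, Matrix.cons_val_one, Matrix.head_cons] at hi hj
  set q := φdef Q hQ u with hq
  have h3 := congrArg QuaternionAlgebra.imK hi
  have h4 := congrArg QuaternionAlgebra.imJ hi
  have h2 := congrArg QuaternionAlgebra.imK hj
  simp only [QuaternionAlgebra.imJ_mul, QuaternionAlgebra.imK_mul] at h3 h4 h2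
  refine ⟨q.re, ?_⟩
  have hφu : φdef Q hQ u = algebraMap ℝ _ q.re := by
    ext <;> simp <;> linarith
  have := congrArg (φdef Q hQ).symm hφu
  rwa [AlgEquiv.symm_apply_apply, AlgEquiv.commutes] at this

lemma algebraMap_inj (hQ : ∀ x, Q x = x 0 ^ 2 + x 1 ^ 2) :
    Function.Injective (algebraMap ℝ (CliffordAlgebra Q)) := by
  intro x y hxy
  have h2 := congrArg (φdef Q hQ) hxy
  rw [AlgEquiv.commutes, AlgEquiv.commutes] at h2
  have h3 := congrArg QuaternionAlgebra.re h2
  simpa using h3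

lemma ι_inj (hQ : ∀ x, Q x = x 0 ^ 2 + x 1 ^ 2) (a b : Fin 2 → ℝ)
    (hab : ι Q a = ι Q b) : a = b := by
  have := congrArg (φdef Q hQ) hab
  rw [φ_ι, φ_ι] at this
  simp only [QuaternionAlgebra.mk.injEq] at this
  funext i
  fin_cases i
  · exact this.2.1
  · exact this.2.2.1

lemma uniq (hQ : ∀ x, Q x = x 0 ^ 2 + x 1 ^ 2) (p pinv q qinv : CliffordAlgebra Q)
    (hp2 : pinv * p = 1) (hq1 : q * qinv = 1) (hq2 : qinv * q = 1)
    (hrp : reverse (Q := Q) p * p = 1) (hrq : reverse (Q := Q) q * q = 1)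
    (hc : ∀ y, p * ι Q y * pinv = q * ι Q y * qinv) : p = q ∨ p = -q := by
  have hcomm : ∀ y, (qinv * p) * ι Q y = ι Q y * (qinv * p) := by
    intro y
    have h1 : qinv * (p * ι Q y * pinv) * p = qinv * (q * ι Q y * qinv) * p := by rw [hc]
    calc (qinv * p) * ι Q y = qinv * (p * ι Q y * pinv) * p := by
          simp only [mul_assoc, hp2, mul_one]
      _ = qinv * (q * ι Q y * qinv) * p := h1
      _ = ι Q y * (qinv * p) := by
          simp only [← mul_assoc, hq2, one_mul]
  obtain ⟨a, ha⟩ := central_scalar Q hQ _ hcomm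
  have hpq : p = q * algebraMap ℝ _ a := by
    rw [← ha, ← mul_assoc, hq1, one_mul]
  have hrev : reverse (Q := Q) p * p = algebraMap ℝ _ (a * a) := by
    rw [hpq, reverse.map_mul, reverse.commutes]
    calc algebraMap ℝ _ a * reverse (Q := Q) q * (q * algebraMap ℝ _ a)
        = algebraMap ℝ _ a * (reverse (Q := Q) q * q) * algebraMap ℝ _ a := by
          simp only [mul_assoc]
      _ = algebraMap ℝ _ (a * a) := by
          rw [hrq, mul_one, ← map_mul]
  have ha2 : a * a = 1 := by
    have h1 : algebraMap ℝ (CliffordAlgebra Q) (a * a) = algebraMap ℝ _ 1 := by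
      rw [← hrev, hrp, map_one]
    exact algebraMap_inj Q hQ h1
  rcases mul_self_eq_one_iff.mp ha2 with h | h
  · left; rw [hpq, h, map_one, mul_one]
  · right; rw [hpq, h, _root_.map_neg, map_one, mul_neg_one]

lemma one_ne_zero' (hQ : ∀ x, Q x = x 0 ^ 2 + x 1 ^ 2) : (1 : CliffordAlgebra Q) ≠ 0 := by
  intro h
  have := congrArg (φdef Q hQ) h
  rw [map_one, map_zero] at this
  exact one_ne_zero this

end Stmt15Aux

open Stmt15Aux DihedralGroup

set_option maxHeartbeats 2000000 in
/-- Let `W` be the dihedral group of order 12 (the Weyl group of `G₂`), and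
let `ε', ε''` be the two sign characters of `W` (written additively, with values in `𝔽₂`)
whose product is the determinant character `ε` of the 2-dimensional reflection representation
`ρ` of `W`, with `ε'` (resp. `ε''`) nontrivial on reflections in long (resp. short) roots
(the reflections `sr i` with `i` even, resp. odd, say).  Then the truncated total
Stiefel–Whitney class of `ρ` equals `1 + ε + ε' ∪ ε''`, which is the product
`(1 + ε')(1 + ε'')`:  explicitly, `w₁(ρ) = det ∘ ρ = ε = ε' + ε''`, and `w₂(ρ)`, computed as
the obstruction cocycle `b` attached to any lift of `ρ` to the Pin group inside the Clifford
algebra of the Euclidean plane, is cohomologous to the cup product `(σ,τ) ↦ ε'(σ) ⬝ ε''(τ)`. -/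
theorem stmt15
    -- the two-dimensional Euclidean quadratic space
    (Q : QuadraticForm ℝ (Fin 2 → ℝ)) (hQ : ∀ x, Q x = x 0 ^ 2 + x 1 ^ 2)
    -- the sign characters ε, ε', ε'' of `W = DihedralGroup 6`, written additively
    (ε ε' ε'' : DihedralGroup 6 → ZMod 2)
    (hεadd : ∀ a b, ε (a * b) = ε a + ε b)
    (hε'add : ∀ a b, ε' (a * b) = ε' a + ε' b)
    (hε''add : ∀ a b, ε'' (a * b) = ε'' a + ε'' b)
    (hε''val : ∀ i : ZMod 6, ε'' (DihedralGroup.sr i) = (i.val : ZMod 2))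
    (hε'val : ∀ i : ZMod 6, ε' (DihedralGroup.sr i) = (i.val : ZMod 2) + 1)
    (hε : ∀ w, ε w = ε' w + ε'' w)
    -- the reflection representation of `W`, orthogonal and faithful, sending each `sr i`
    -- to a reflection
    (ρ : DihedralGroup 6 →* ((Fin 2 → ℝ) ≃ₗ[ℝ] (Fin 2 → ℝ)))
    (hρinj : Function.Injective ρ)
    (hρQ : ∀ w x, Q (ρ w x) = Q x)
    (hρrefl : ∀ i : ZMod 6, ∃ v, Q v ≠ 0 ∧
      ∀ x, ρ (DihedralGroup.sr i) x = x - (polar Q v x / Q v) • v) :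
    -- (1) `w₁(ρ) = ε`
    (∀ w, LinearMap.det ((ρ w : (Fin 2 → ℝ) ≃ₗ[ℝ] (Fin 2 → ℝ)) :
        (Fin 2 → ℝ) →ₗ[ℝ] (Fin 2 → ℝ)) = (-1 : ℝ) ^ (ε w).val) ∧
    -- (2) `w₂(ρ) = ε' ∪ ε''`: for any lift `s` of `ρ` to the Pin group in the Clifford
    -- algebra, the obstruction 2-cocycle `b` defined by `s σ * s τ = (-1)^(b σ τ) * s (σ τ)`
    -- is cohomologous to the cup product `(σ,τ) ↦ ε' σ * ε'' τ`
    (∀ s sinv : DihedralGroup 6 → CliffordAlgebra Q,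
      (∀ w, s w * sinv w = 1) → (∀ w, sinv w * s w = 1) →
      (∀ w, s w ∈ evenOdd Q (ε w)) →
      (∀ w, reverse (Q := Q) (s w) * s w = 1) →
      (∀ w y, ((-1 : CliffordAlgebra Q) ^ (ε w).val) * (s w * ι Q y * sinv w)
        = ι Q ((ρ w : (Fin 2 → ℝ) ≃ₗ[ℝ] (Fin 2 → ℝ)) y)) →
      ∀ b : DihedralGroup 6 → DihedralGroup 6 → ZMod 2,
        (∀ σ τ, s σ * s τ = ((-1 : CliffordAlgebra Q) ^ (b σ τ).val) * s (σ * τ)) →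
        ∃ h : DihedralGroup 6 → ZMod 2,
          ∀ σ τ, b σ τ = ε' σ * ε'' τ + h σ + h τ + h (σ * τ)) := by
  -- values of the characters
  have hsr_sq : ∀ m : ZMod 6, (sr 0 : W) * sr m = r m := by
    intro m; rw [sr_mul_sr, sub_zero]
  have hεsr : ∀ i : ZMod 6, ε (sr i) = 1 := by
    intro i; rw [hε, hε'val, hε''val]
    have : ∀ c : ZMod 2, c + 1 + c = 1 := by decide
    exact this _
  have hεr : ∀ m : ZMod 6, ε (r m) = 0 := by
    intro m
    have h2 := hεadd (sr 0) (sr m)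
    rw [hsr_sq, hεsr, hεsr] at h2
    rw [h2]; rfl
  have hε'r : ∀ m : ZMod 6, ε' (r m) = (m.val : ZMod 2) := by
    intro m
    have h2 := hε'add (sr 0) (sr m)
    rw [hsr_sq, hε'val, hε'val] at h2
    rw [h2]
    have : ∀ c : ZMod 2, ((0:ZMod 6).val : ZMod 2) + 1 + (c + 1) = c := by decide
    exact this _
  have hε''r : ∀ m : ZMod 6, ε'' (r m) = (m.val : ZMod 2) := by
    intro m
    have h2 := hε''add (sr 0) (sr m)
    rw [hsr_sq, hε''val, hε''val] at h2
    rw [h2]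
    have : ∀ c : ZMod 2, ((0:ZMod 6).val : ZMod 2) + c = c := by decide
    exact this _
  have hE1 : ∀ w : W, ε' w = E1 w := by
    intro w; cases w with
    | r m => rw [hε'r]; rfl
    | sr m => rw [hε'val]; rfl
  have hE2 : ∀ w : W, ε'' w = E2 w := by
    intro w; cases w with
    | r m => rw [hε''r]; rfl
    | sr m => rw [hε''val]; rfl
  constructor
  · -- part (1)
    intro w
    cases w with
    | r m =>
      rw [hεr]
      have h1 : (r m : W) = sr 0 * sr m := (hsr_sq m).symm
      rw [h1, map_mul]
      have h2 : (((ρ (sr 0) * ρ (sr m) : (Fin 2 → ℝ) ≃ₗ[ℝ] (Fin 2 → ℝ))) :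
          (Fin 2 → ℝ) →ₗ[ℝ] (Fin 2 → ℝ)) =
          ((ρ (sr 0) : (Fin 2 → ℝ) ≃ₗ[ℝ] (Fin 2 → ℝ)) : (Fin 2 → ℝ) →ₗ[ℝ] (Fin 2 → ℝ)) ∘ₗ
          ((ρ (sr m) : (Fin 2 → ℝ) ≃ₗ[ℝ] (Fin 2 → ℝ)) : (Fin 2 → ℝ) →ₗ[ℝ] (Fin 2 → ℝ)) := rfl
      rw [h2, LinearMap.det_comp]
      obtain ⟨v0, hv0, hrefl0⟩ := hρrefl 0
      obtain ⟨vm, hvm, hreflm⟩ := hρrefl m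
      rw [det_reflection Q hQ v0 hv0 _ hrefl0, det_reflection Q hQ vm hvm _ hreflm]
      rw [show ((0:ZMod 2).val) = 0 from rfl]
      norm_num
    | sr i =>
      rw [hεsr]
      obtain ⟨v, hv, hrefl⟩ := hρrefl i
      rw [det_reflection Q hQ v hv _ hrefl]
      rw [show ((1:ZMod 2).val) = 1 from rfl]
      norm_num
  · -- part (2)
    intro s sinv hs1 hs2 _ hsrev hsconj b hb
    classical
    -- normalized reflection vectors
    have hnorm : ∀ (w : W) (v : Fin 2 → ℝ), Q v ≠ 0 →
        (∀ x, ρ w x = x - (polar Q v x / Q v) • v) →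
        ∃ e, Q e = 1 ∧ ∀ x, ρ w x = x - polar Q e x • e := by
      intro w v hv hrefl
      have hnn : 0 ≤ Q v := by rw [hQ]; positivity
      have hpos : 0 < Q v := lt_of_le_of_ne hnn (Ne.symm hv)
      have hsq : Real.sqrt (Q v) * Real.sqrt (Q v) = Q v := Real.mul_self_sqrt hnn
      have hn0 : Real.sqrt (Q v) ≠ 0 := by
        have := Real.sqrt_pos.mpr hpos; linarith
      refine ⟨(Real.sqrt (Q v))⁻¹ • v, ?_, ?_⟩
      · rw [QuadraticMap.map_smul]
        rw [smul_eq_mul, ← mul_inv, hsq]; exact inv_mul_cancel₀ hv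
      · intro x
        rw [hrefl x, QuadraticMap.polar_smul_left, smul_smul, smul_eq_mul]
        congr 1
        rw [← hsq]
        field_simp
        rw [Real.sqrt_sq (Real.sqrt_nonneg _)]
    obtain ⟨w0, hw0, hw0refl⟩ := hρrefl 0
    obtain ⟨e0, he0Q, he0refl⟩ := hnorm (sr 0) w0 hw0 hw0refl
    obtain ⟨w1, hw1, hw1refl⟩ := hρrefl 1
    obtain ⟨e1, he1Q, he1refl⟩ := hnorm (sr 1) w1 hw1 hw1refl
    set U0 : CliffordAlgebra Q := ι Q e0 with hU0
    set U1 : CliffordAlgebra Q := ι Q e1 with hU1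
    have hU0sq : U0 * U0 = 1 := by rw [hU0, ι_sq_scalar, he0Q, map_one]
    have hU1sq : U1 * U1 = 1 := by rw [hU1, ι_sq_scalar, he1Q, map_one]
    -- conjugation by a unit reflection vector
    have hconjU : ∀ (e : Fin 2 → ℝ) (w : W), Q e = 1 → (∀ x, ρ w x = x - polar Q e x • e) →
        ∀ y, ι Q e * ι Q y * ι Q e
          = -(ι Q ((ρ w : (Fin 2 → ℝ) ≃ₗ[ℝ] (Fin 2 → ℝ)) y)) := by
      intro e w heQ hrefl y
      have hswap : ι Q e * ι Q y = algebraMap ℝ _ (polar Q e y) - ι Q y * ι Q e := by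
        rw [eq_sub_iff_add_eq, ι_mul_ι_add_swap]
      have hcalc : ι Q e * ι Q y * ι Q e = polar Q e y • ι Q e - ι Q y := by
                   calc ι Q e * ι Q y * ι Q e
            = (algebraMap ℝ _ (polar Q e y) - ι Q y * ι Q e) * ι Q e := by rw [hswap]
          _ = polar Q e y • ι Q e - ι Q y * (ι Q e * ι Q e) := by
              rw [sub_mul, Algebra.smul_def, mul_assoc]
          _ = polar Q e y • ι Q e - ι Q y := by rw [ι_sq_scalar, heQ, map_one, mul_one]
      rw [hcalc, hrefl y, _root_.map_sub, LinearMap.map_smul, neg_sub]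
    -- the basic rotation lift
    set Z : CliffordAlgebra Q := U0 * U1 with hZ
    set Zi : CliffordAlgebra Q := U1 * U0 with hZi
    have hZZi : Z * Zi = 1 := by
      rw [hZ, hZi, mul_assoc, ← mul_assoc U1, hU1sq, one_mul, hU0sq]
    have hZiZ : Zi * Z = 1 := by
      rw [hZ, hZi, mul_assoc, ← mul_assoc U0, hU0sq, one_mul, hU1sq]
    have hmulρ : ∀ (u v : W) y, (ρ u : (Fin 2 → ℝ) ≃ₗ[ℝ] (Fin 2 → ℝ))
        ((ρ v : (Fin 2 → ℝ) ≃ₗ[ℝ] (Fin 2 → ℝ)) y)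
        = (ρ (u * v) : (Fin 2 → ℝ) ≃ₗ[ℝ] (Fin 2 → ℝ)) y := by
      intro u v y; rw [map_mul]; rfl
    have hZconj : ∀ y, Z * ι Q y * Zi
        = ι Q ((ρ (r 1) : (Fin 2 → ℝ) ≃ₗ[ℝ] (Fin 2 → ℝ)) y) := by
      intro y
      have h1 := hconjU e1 (sr 1) he1Q he1refl y
      have h0 := hconjU e0 (sr 0) he0Q he0refl
        ((ρ (sr 1) : (Fin 2 → ℝ) ≃ₗ[ℝ] (Fin 2 → ℝ)) y)
      calc Z * ι Q y * Zi = U0 * (U1 * ι Q y * U1) * U0 := by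
            rw [hZ, hZi]; simp only [mul_assoc]
        _ = U0 * (-(ι Q ((ρ (sr 1) : (Fin 2 → ℝ) ≃ₗ[ℝ] (Fin 2 → ℝ)) y))) * U0 := by rw [h1]
        _ = -(U0 * ι Q ((ρ (sr 1) : (Fin 2 → ℝ) ≃ₗ[ℝ] (Fin 2 → ℝ)) y) * U0) := by
            rw [mul_neg, neg_mul]
        _ = ι Q ((ρ (sr 0) : (Fin 2 → ℝ) ≃ₗ[ℝ] (Fin 2 → ℝ))
              ((ρ (sr 1) : (Fin 2 → ℝ) ≃ₗ[ℝ] (Fin 2 → ℝ)) y)) := by rw [h0, neg_neg]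
        _ = ι Q ((ρ (r 1) : (Fin 2 → ℝ) ≃ₗ[ℝ] (Fin 2 → ℝ)) y) := by
            rw [hmulρ, hsr_sq]
    have hZmZim : ∀ m : ℕ, Z^m * Zi^m = 1 ∧ Zi^m * Z^m = 1 := by
      intro m
      induction m with
      | zero => simp
      | succ k ih =>
        constructor
        · calc Z^(k+1) * Zi^(k+1) = Z^k * (Z * Zi) * Zi^k := by
                 rw [pow_succ, pow_succ']; simp only [mul_assoc]
            _ = 1 := by rw [hZZi, mul_one, ih.1]
        · calc Zi^(k+1) * Z^(k+1) = Zi^k * (Zi * Z) * Z^k := by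
                 rw [pow_succ, pow_succ']; simp only [mul_assoc]
            _ = 1 := by rw [hZiZ, mul_one, ih.2]
    have hcastval : ∀ m : ZMod 6, ((m.val : ℕ) : ZMod 6) = m := by
      intro m; rw [ZMod.natCast_val, ZMod.cast_id]
    have hZmconj : ∀ (m : ℕ) y, Z^m * ι Q y * Zi^m
        = ι Q ((ρ (r (m : ZMod 6)) : (Fin 2 → ℝ) ≃ₗ[ℝ] (Fin 2 → ℝ)) y) := by
      intro m
      induction m with
      | zero =>
        intro y
        simp only [pow_zero, one_mul, mul_one]
        rw [show ((0:ℕ) : ZMod 6) = 0 from rfl, show (r 0 : W) = 1 from rfl, map_one]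
        rfl
      | succ k ih =>
        intro y
        calc Z^(k+1) * ι Q y * Zi^(k+1) = Z^k * (Z * ι Q y * Zi) * Zi^k := by
              rw [pow_succ, pow_succ']; simp only [mul_assoc]
          _ = Z^k * ι Q ((ρ (r 1) : (Fin 2 → ℝ) ≃ₗ[ℝ] (Fin 2 → ℝ)) y) * Zi^k := by
              rw [hZconj]
          _ = ι Q ((ρ (r (k : ZMod 6)) : (Fin 2 → ℝ) ≃ₗ[ℝ] (Fin 2 → ℝ))
                ((ρ (r 1) : (Fin 2 → ℝ) ≃ₗ[ℝ] (Fin 2 → ℝ)) y)) := ih _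
          _ = ι Q ((ρ (r ((k+1 : ℕ) : ZMod 6)) : (Fin 2 → ℝ) ≃ₗ[ℝ] (Fin 2 → ℝ)) y) := by
              rw [hmulρ, r_mul_r]
              push_cast
              ring_nf
    -- reverse facts
    have hrevZm : ∀ m : ℕ, reverse (Q := Q) (Z^m) = Zi^m := by
      intro m
      induction m with
      | zero => simp
      | succ k ih =>
        rw [pow_succ, reverse.map_mul, ih, hZ, reverse.map_mul, reverse_ι, reverse_ι,
          ← hZi, ← pow_succ']
    have hrevU0 : reverse (Q := Q) U0 = U0 := by rw [hU0, reverse_ι]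
    -- Z^6 = -1
    have hr6 : ((6 : ℕ) : ZMod 6) = 0 := by decide
    have h6conj : ∀ y, Z^6 * ι Q y * Zi^6 = (1:CliffordAlgebra Q) * ι Q y * 1 := by
      intro y
      rw [hZmconj 6 y, hr6, show (r 0 : W) = 1 from rfl, map_one, one_mul, mul_one]
      rfl
    have h6or : Z^6 = 1 ∨ Z^6 = -1 := by
      refine uniq Q hQ (Z^6) (Zi^6) 1 1 (hZmZim 6).2 (mul_one 1) (mul_one 1) ?_ ?_ h6conj
      · rw [hrevZm, (hZmZim 6).2]
      · rw [reverse.map_one, mul_one]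
    have hZ6 : Z^6 = -1 := by
      rcases h6or with h6 | h6
      · exfalso
        obtain ⟨a, d, hZad⟩ : ∃ a d : ℝ, φdef Q hQ Z = ⟨a,0,0,d⟩ := by
          refine ⟨(φdef Q hQ Z).re, (φdef Q hQ Z).imK, ?_⟩
          have hm : φdef Q hQ Z = φdef Q hQ U0 * φdef Q hQ U1 := by rw [hZ, map_mul]
          rw [hU0, hU1, φ_ι, φ_ι] at hm
          apply QuaternionAlgebra.ext
          · rfl
          · rw [hm]; simp [QuaternionAlgebra.imI_mul]
          · rw [hm]; simp [QuaternionAlgebra.imJ_mul]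
          · rfl
        obtain ⟨a3, d3, h3⟩ : ∃ a3 d3 : ℝ, φdef Q hQ (Z^3) = ⟨a3,0,0,d3⟩ := by
          refine ⟨(φdef Q hQ (Z^3)).re, (φdef Q hQ (Z^3)).imK, ?_⟩
          have hm : φdef Q hQ (Z^3) = φdef Q hQ Z * φdef Q hQ Z * φdef Q hQ Z := by
            rw [show (3:ℕ) = 1+1+1 from rfl, pow_add, pow_add, pow_one, map_mul, map_mul]
          rw [hZad] at hm
          apply QuaternionAlgebra.ext
          · rfl
          · rw [hm]; simp [QuaternionAlgebra.imI_mul, QuaternionAlgebra.imJ_mul,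
              QuaternionAlgebra.re_mul, QuaternionAlgebra.imK_mul]
          · rw [hm]; simp [QuaternionAlgebra.imI_mul, QuaternionAlgebra.imJ_mul,
              QuaternionAlgebra.re_mul, QuaternionAlgebra.imK_mul]
          · rfl
        have hsq : φdef Q hQ (Z^3) * φdef Q hQ (Z^3) = 1 := by
          rw [← map_mul, ← pow_add, h6, map_one]
        rw [h3] at hsq
        have hre := congrArg QuaternionAlgebra.re hsq
        have hk := congrArg QuaternionAlgebra.imK hsq
        simp [QuaternionAlgebra.re_mul, QuaternionAlgebra.imK_mul] at hre hk
        have hd3 : d3 = 0 := by nlinarith [sq_nonneg a3, sq_nonneg d3]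
        have ha3 : a3 * a3 = 1 := by nlinarith
        -- Z^3 is a scalar
        have hZ3scal : Z^3 = algebraMap ℝ (CliffordAlgebra Q) a3 := by
          apply (φdef Q hQ).injective
          rw [h3, hd3, AlgEquiv.commutes]
          ext <;> simp
        have hconj3 : ∀ y, ι Q ((ρ (r 3) : (Fin 2 → ℝ) ≃ₗ[ℝ] (Fin 2 → ℝ)) y) = ι Q y := by
          intro y
          have := hZmconj 3 y
          rw [show ((3:ℕ) : ZMod 6) = 3 from rfl] at this
          rw [← this, hZ3scal]
          calc algebraMap ℝ (CliffordAlgebra Q) a3 * ι Q y * Zi^3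
              = ι Q y * (algebraMap ℝ (CliffordAlgebra Q) a3 * Zi^3) := by
                rw [Algebra.commutes a3 (ι Q y), mul_assoc]
            _ = ι Q y * (Z^3 * Zi^3) := by rw [hZ3scal]
            _ = ι Q y := by rw [(hZmZim 3).1, mul_one]
        have hρ3 : ρ (r 3) = 1 := by
          have h13 : ∀ y, (ρ (r 3) : (Fin 2 → ℝ) ≃ₗ[ℝ] (Fin 2 → ℝ)) y = y := by
            intro y; exact ι_inj Q hQ _ _ (hconj3 y)
          apply DFunLike.ext
          intro y
          exact h13 y
        have : (r 3 : W) = 1 := hρinj (by rw [hρ3, map_one])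
        exact absurd this (by decide)
      · exact h6
    have hZ12 : Z^12 = 1 := by
      rw [show (12:ℕ) = 6+6 from rfl, pow_add, hZ6]
      norm_num
    have hmod : ∀ a : ℕ, Z^a = Z^(a % 12) := by
      intro a
      conv_lhs => rw [← Nat.div_add_mod a 12]
      rw [pow_add, pow_mul, hZ12, one_pow, one_mul]
    have hshift : ∀ a : ℕ, Z^(a+6) = -(Z^a) := by
      intro a; rw [pow_add, hZ6, mul_neg_one]
    have hZiZ11 : Zi = Z^11 := by
      have h1 : Zi * (Z * Z^11) = (Zi * Z) * Z^11 := (mul_assoc Zi Z (Z^11)).symm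
      calc Zi = Zi * Z^12 := by rw [hZ12, mul_one]
        _ = Zi * (Z * Z^11) := by rw [show (12:ℕ) = 11+1 from rfl, pow_succ']
        _ = (Zi * Z) * Z^11 := h1
        _ = Z^11 := by rw [hZiZ, one_mul]
    have hZim : ∀ m : ℕ, Zi^m = Z^(11*m) := by
      intro m; rw [hZiZ11, ← pow_mul]
    have hU0Zm : ∀ m : ℕ, Z^m * U0 = U0 * Zi^m := by
      intro m
      induction m with
      | zero => simp
      | succ k ih =>
        have hZU0 : Z * U0 = U0 * Zi := by rw [hZ, hZi, mul_assoc]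
        calc Z^(k+1) * U0 = Z^k * (Z * U0) := by rw [pow_succ, mul_assoc]
          _ = (Z^k * U0) * Zi := by rw [hZU0, ← mul_assoc]
          _ = U0 * Zi^k * Zi := by rw [ih]
          _ = U0 * Zi^(k+1) := by rw [pow_succ, mul_assoc]
    -- the canonical section
    set can : W → CliffordAlgebra Q := fun w => match w with
      | .r m => Z^m.val
      | .sr m => U0 * Z^m.val with hcan
    set cani : W → CliffordAlgebra Q := fun w => match w with
      | .r m => Zi^m.val
      | .sr m => Zi^m.val * U0 with hcani
    have hcanr : ∀ m : ZMod 6, can (r m) = Z^m.val := fun m => by rw [hcan]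
    have hcansr : ∀ m : ZMod 6, can (sr m) = U0 * Z^m.val := fun m => by rw [hcan]
    have hcanir : ∀ m : ZMod 6, cani (r m) = Zi^m.val := fun m => by rw [hcani]
    have hcanisr : ∀ m : ZMod 6, cani (sr m) = Zi^m.val * U0 := fun m => by rw [hcani]
    have hsrU : ∀ m : ZMod 6, (Zi^m.val * U0) * (U0 * Z^m.val) = 1 := by
      intro m
      calc (Zi^m.val * U0) * (U0 * Z^m.val) = Zi^m.val * (U0 * U0) * Z^m.val := by
            simp only [mul_assoc]
        _ = 1 := by rw [hU0sq, mul_one, (hZmZim m.val).2]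
    have hcan1 : ∀ w, can w * cani w = 1 := by
      intro w
      cases w with
      | r m => rw [hcanr, hcanir]; exact (hZmZim m.val).1
      | sr m =>
        rw [hcansr, hcanisr]
        calc (U0 * Z^m.val) * (Zi^m.val * U0) = U0 * (Z^m.val * Zi^m.val) * U0 := by
              simp only [mul_assoc]
          _ = 1 := by rw [(hZmZim m.val).1, mul_one, hU0sq]
    have hcan2 : ∀ w, cani w * can w = 1 := by
      intro w
      cases w with
      | r m => rw [hcanr, hcanir]; exact (hZmZim m.val).2
      | sr m => rw [hcansr, hcanisr]; exact hsrU m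
    have hcanrev : ∀ w, reverse (Q := Q) (can w) * can w = 1 := by
      intro w
      cases w with
      | r m =>
        rw [hcanr, hrevZm]; exact (hZmZim m.val).2
      | sr m =>
        rw [hcansr, reverse.map_mul, hrevZm, hrevU0]
        exact hsrU m
    have hcanconj : ∀ w y, ((-1 : CliffordAlgebra Q) ^ (ε w).val) * (can w * ι Q y * cani w)
        = ι Q ((ρ w : (Fin 2 → ℝ) ≃ₗ[ℝ] (Fin 2 → ℝ)) y) := by
      intro w y
      cases w with
      | r m =>
        rw [hεr, hcanr, hcanir, show ((0:ZMod 2).val) = 0 from rfl, pow_zero, one_mul,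
          hZmconj, hcastval]
      | sr m =>
        rw [hεsr, hcansr, hcanisr, show ((1:ZMod 2).val) = 1 from rfl, pow_one]
        have h0 := hconjU e0 (sr 0) he0Q he0refl
          ((ρ (r (m.val : ZMod 6)) : (Fin 2 → ℝ) ≃ₗ[ℝ] (Fin 2 → ℝ)) y)
        calc (-1:CliffordAlgebra Q) * ((U0 * Z^m.val) * ι Q y * (Zi^m.val * U0))
            = -(U0 * (Z^m.val * ι Q y * Zi^m.val) * U0) := by
              simp only [mul_assoc]
              rw [neg_one_mul]
          _ = -(U0 * ι Q ((ρ (r (m.val : ZMod 6)) : (Fin 2 → ℝ) ≃ₗ[ℝ] (Fin 2 → ℝ)) y) * U0) := by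
              rw [hZmconj]
          _ = ι Q ((ρ (sr 0) : (Fin 2 → ℝ) ≃ₗ[ℝ] (Fin 2 → ℝ))
                ((ρ (r (m.val : ZMod 6)) : (Fin 2 → ℝ) ≃ₗ[ℝ] (Fin 2 → ℝ)) y)) := by
              rw [h0, neg_neg]
          _ = ι Q ((ρ (sr m) : (Fin 2 → ℝ) ≃ₗ[ℝ] (Fin 2 → ℝ)) y) := by
              rw [hmulρ, sr_mul_r, zero_add, hcastval]
    -- comparison of s with the canonical section
    have hcancel : ∀ (e : ℕ) (X Y : CliffordAlgebra Q), (-1:CliffordAlgebra Q)^e * X = (-1:CliffordAlgebra Q)^e * Y → X = Y := by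
      intro e X Y h
      have h2 := congrArg (fun t => (-1:CliffordAlgebra Q)^e * t) h
      simpa [← mul_assoc, neg_one_pow_self_mul] using h2
    have hcmp : ∀ w, s w = can w ∨ s w = -(can w) := by
      intro w
      refine uniq Q hQ (s w) (sinv w) (can w) (cani w) (hs2 w) (hcan1 w) (hcan2 w)
        (hsrev w) (hcanrev w) ?_
      intro y
      exact hcancel ((ε w).val) _ _ ((hsconj w y).trans (hcanconj w y).symm)
    set g : W → ZMod 2 := fun w => if s w = can w then 0 else 1 with hg
    have hsg : ∀ w, s w = ((-1:CliffordAlgebra Q)^((g w).val)) * can w := by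
      intro w
      by_cases hc : s w = can w
      · have hgw : g w = 0 := by simp [hg, hc]
        rw [hgw, show ((0:ZMod 2).val) = 0 from rfl, pow_zero, one_mul]
        exact hc
      · have hgw : g w = 1 := by simp [hg, hc]
        have h2 : s w = -(can w) := (hcmp w).resolve_left hc
        rw [hgw, show ((1:ZMod 2).val) = 1 from rfl, pow_one, neg_one_mul]
        exact h2
    -- multiplication rule for the canonical section
    have hcanmul : ∀ σ τ : W, can σ * can τ = ((-1:CliffordAlgebra Q)^((Bf σ τ).val)) * can (σ * τ) := by
      intro σ τ
      have hval : ∀ m : ZMod 6, m.val < 6 := fun m => ZMod.val_lt m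
      cases σ with
      | r m =>
        cases τ with
        | r n =>
          rw [r_mul_r, hcanr, hcanr, hcanr]
          have hadd : (m+n).val = (m.val + n.val) % 6 := ZMod.val_add m n
          rw [show Bf (r m) (r n) = (if m.val + n.val < 6 then 0 else 1 : ZMod 2) from rfl]
          split_ifs with hlt
          · rw [show ((0:ZMod 2).val) = 0 from rfl, pow_zero, one_mul, ← pow_add,
              hmod (m.val + n.val), hmod ((m+n).val)]
            congr 1
            omega
          · rw [show ((1:ZMod 2).val) = 1 from rfl, pow_one, neg_one_mul, ← pow_add,
              hmod (m.val + n.val)]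
            rw [show (m.val + n.val) % 12 = (m+n).val + 6 by
              have := hval m; have := hval n; omega]
            rw [hshift]
        | sr n =>
          rw [r_mul_sr, hcanr, hcansr, hcansr]
          have hc : ((n-m).val + m.val) % 6 = n.val := by
            have h1 : (n - m) + m = n := by ring
            have := ZMod.val_add (n-m) m
            rw [h1] at this
            omega
          have hL : Z^m.val * (U0 * Z^n.val) = U0 * Z^(11*m.val + n.val) := by
            calc Z^m.val * (U0 * Z^n.val) = (Z^m.val * U0) * Z^n.val := by rw [mul_assoc]
              _ = U0 * Zi^m.val * Z^n.val := by rw [hU0Zm]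
              _ = U0 * (Z^(11*m.val) * Z^n.val) := by rw [hZim, mul_assoc]
              _ = U0 * Z^(11*m.val + n.val) := by rw [← pow_add]
          rw [hL]
          rw [show Bf (r m) (sr n) = (if (11 * m.val + n.val) % 12 = (n - m).val then 0 else 1 : ZMod 2) from rfl]
          split_ifs with hcond
          · rw [show ((0:ZMod 2).val) = 0 from rfl, pow_zero, one_mul]
            congr 1
            rw [hmod (11*m.val + n.val), hmod ((n-m).val), hcond,
              Nat.mod_eq_of_lt (lt_trans (hval (n-m)) (by norm_num))]
          · rw [show ((1:ZMod 2).val) = 1 from rfl, pow_one, neg_one_mul, ← mul_neg]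
            congr 1
            rw [hmod (11*m.val + n.val)]
            rw [show (11*m.val + n.val) % 12 = (n-m).val + 6 by
              have q1 := hval m; have q2 := hval n; have q3 := hval (n-m); omega]
            rw [hshift]
      | sr m =>
        cases τ with
        | r n =>
          rw [sr_mul_r, hcansr, hcanr, hcansr]
          have hadd : (m+n).val = (m.val + n.val) % 6 := ZMod.val_add m n
          rw [mul_assoc, ← pow_add]
          rw [show Bf (sr m) (r n) = (if m.val + n.val < 6 then 0 else 1 : ZMod 2) from rfl]
          split_ifs with hlt
          · rw [show ((0:ZMod 2).val) = 0 from rfl, pow_zero, one_mul]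
            congr 1
            rw [hmod (m.val + n.val), hmod ((m+n).val)]
            congr 1
            omega
          · rw [show ((1:ZMod 2).val) = 1 from rfl, pow_one, neg_one_mul, ← mul_neg]
            congr 1
            rw [hmod (m.val + n.val)]
            rw [show (m.val + n.val) % 12 = (m+n).val + 6 by
              have := hval m; have := hval n; omega]
            rw [hshift]
        | sr n =>
          rw [sr_mul_sr, hcansr, hcansr, hcanr]
          have hc : ((n-m).val + m.val) % 6 = n.val := by
            have h1 : (n - m) + m = n := by ring
            have := ZMod.val_add (n-m) m
            rw [h1] at this
            omega
          have hL : (U0 * Z^m.val) * (U0 * Z^n.val) = Z^(11*m.val + n.val) := by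
            calc (U0 * Z^m.val) * (U0 * Z^n.val) = U0 * ((Z^m.val * U0) * Z^n.val) := by
                  simp only [mul_assoc]
              _ = U0 * ((U0 * Zi^m.val) * Z^n.val) := by rw [hU0Zm]
              _ = (U0 * U0) * (Zi^m.val * Z^n.val) := by simp only [mul_assoc]
              _ = Zi^m.val * Z^n.val := by rw [hU0sq, one_mul]
              _ = Z^(11*m.val) * Z^n.val := by rw [hZim]
              _ = Z^(11*m.val + n.val) := by rw [← pow_add]
          rw [hL]
          rw [show Bf (sr m) (sr n) = (if (11 * m.val + n.val) % 12 = (n - m).val then 0 else 1 : ZMod 2) from rfl]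
          split_ifs with hcond
          · rw [show ((0:ZMod 2).val) = 0 from rfl, pow_zero, one_mul]
            rw [hmod (11*m.val + n.val), hmod ((n-m).val), hcond,
              Nat.mod_eq_of_lt (lt_trans (hval (n-m)) (by norm_num))]
          · rw [show ((1:ZMod 2).val) = 1 from rfl, pow_one, neg_one_mul]
            rw [hmod (11*m.val + n.val)]
            rw [show (11*m.val + n.val) % 12 = (n-m).val + 6 by
              have q1 := hval m; have q2 := hval n; have q3 := hval (n-m); omega]
            rw [hshift]
    -- sign cancellation
    have hsign : ∀ (x y : ZMod 2) (P Pi : CliffordAlgebra Q), P * Pi = 1 →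
        ((-1:CliffordAlgebra Q)^x.val) * P = ((-1:CliffordAlgebra Q)^y.val) * P → x = y := by
      intro x y P Pi hPPi hxy
      by_contra hne
      have hvals := zmod2_ne x y hne
      have hPnegP : P = -P := by
        rcases hvals with ⟨h1, h2⟩ | ⟨h1, h2⟩
        · rw [h1, h2, pow_zero, pow_one, one_mul, neg_one_mul] at hxy
          exact hxy
        · rw [h1, h2, pow_zero, pow_one, one_mul, neg_one_mul] at hxy
          exact hxy.symm
      have hP0 : P = 0 := by
        have h2 : P + P = 0 := by nth_rewrite 1 [hPnegP]; exact neg_add_cancel P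
        have h3 : (2:ℝ) • P = 0 := by rw [two_smul]; exact h2
        rcases smul_eq_zero.mp h3 with h | h
        · norm_num at h
        · exact h
      rw [hP0, zero_mul] at hPPi
      exact one_ne_zero' Q hQ hPPi.symm
    -- compute b
    have hbform : ∀ σ τ : W, b σ τ = Bf σ τ + g σ + g τ + g (σ * τ) := by
      intro σ τ
      have h1 := hb σ τ
      rw [hsg σ, hsg τ, hsg (σ * τ)] at h1
      have h2 : ((-1:CliffordAlgebra Q)^((g σ + g τ).val)) * (can σ * can τ)
          = ((-1:CliffordAlgebra Q)^((b σ τ + g (σ*τ)).val)) * can (σ * τ) := by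
        rw [← neg_one_pow_val_mul, ← neg_one_pow_val_mul]
        calc ((-1:CliffordAlgebra Q)^(g σ).val) * ((-1:CliffordAlgebra Q)^(g τ).val) * (can σ * can τ)
            = ((-1:CliffordAlgebra Q)^(g σ).val) * (((-1:CliffordAlgebra Q)^(g τ).val) * can σ * can τ) := by
              simp only [mul_assoc]
          _ = ((-1:CliffordAlgebra Q)^(g σ).val) * (can σ * ((-1:CliffordAlgebra Q)^(g τ).val) * can τ) := by
              rw [neg_one_pow_central ((g τ).val) (can σ)]
          _ = ((-1:CliffordAlgebra Q)^(g σ).val) * can σ * (((-1:CliffordAlgebra Q)^(g τ).val) * can τ) := by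
              simp only [mul_assoc]
          _ = ((-1:CliffordAlgebra Q)^(b σ τ).val) * (((-1:CliffordAlgebra Q)^(g (σ*τ)).val) * can (σ * τ)) := h1
          _ = ((-1:CliffordAlgebra Q)^(b σ τ).val) * ((-1:CliffordAlgebra Q)^(g (σ*τ)).val) * can (σ * τ) := by
              rw [mul_assoc]
      rw [hcanmul σ τ, ← mul_assoc, neg_one_pow_val_mul] at h2
      have h3 : g σ + g τ + Bf σ τ = b σ τ + g (σ * τ) :=
        hsign _ _ _ (cani (σ * τ)) (hcan1 (σ * τ)) h2
      exact zmod2_solve _ _ _ _ _ h3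
    -- conclude
    refine ⟨fun w => h₀f w + g w, ?_⟩
    intro σ τ
    rw [hbform σ τ, hE1 σ, hE2 τ]
    exact zmod2_final _ _ _ _ _ _ _ _ (key_decide σ τ)
end

section
/- Let F be a local field with nontrivial additive character ψ, and let (V,Q), (Ṽ,Q̃) be nondegenerate quadratic spaces of the same even dimension over F, and ρ a virtual orthogonal complex representation of Gal(F̄/F) of dimension 0. If the relative Hasse–Witt invariant HW(Q, Q̃) ∈ Br₂(F)_s equals the truncated Stiefel–Whitney class S̄W(ρ) = (w₁(ρ), w̄₂(ρ)), then γ(Q̃, ψ)·γ(Q, ψ)⁻¹ = ε_L(ρ, ψ), assuming: (a) γ(Q,ψ) = ε_L(χ_Q, ψ)·ζ_Q where χ_Q = Wall₁(Q) and ζ_Q = ±1 according to Wall₂(Q) (Weil/Jacquet–Langlands), and (b) ε_L(ρ,ψ) = ε_L(det ρ, ψ)·ζ_ρ with ζ_ρ determined by w̄₂(ρ) (Deligne). -/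
/-- Let `F` be a local field with additive character `ψ`.  Model the
even-dimensional nondegenerate quadratic spaces over `F` by a type `S` with orthogonal sum
`osum` and sign change `neg`, the Weil index by `γ : S → ℂ`, the two components of the Wall
invariant by `W1 : S → X = H¹(F,𝔽₂)` and `W2 : S → B = Br₂(F)` (with the Wall group law on
`X × B` twisted by the cup product `cup`), Langlands epsilon factors of sign characters by
`εL : X → ℂ`, and `ζ : B → ℂ` the `±1`-valued function of Propositions of Weil/Deligne.
Let `ρ` be a virtual orthogonal representation of the Galois group of dimension 0, with
Stiefel–Whitney data `w1ρ ∈ X`, `w2ρ ∈ B` and epsilon factor `εLρ`.  Assume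
(a) `γ(Q) = εL(Wall₁ Q) ⬝ ζ(Wall₂ Q)` for every space (Weil/Jacquet–Langlands), and
(b) `εLρ = εL(w1ρ) ⬝ ζ(w2ρ)` (Deligne),
together with the standard multiplicativity properties of `γ` and `Wall`.
If `HW(Q, Q̃) = Wall(Q̃) − Wall(Q)` equals `S̄W(ρ) = (w1ρ, w2ρ)` in `Br₂(F)_s`, then
`γ(Q̃,ψ) ⬝ γ(Q,ψ)⁻¹ = ε_L(ρ,ψ)`. -/
theorem stmt17
    (X : Type*) [AddCommGroup X] (B : Type*) [AddCommGroup B]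
    (hX2 : ∀ χ : X, χ + χ = 0) (hB2 : ∀ b : B, b + b = 0)
    (cup : X → X → B)
    (S : Type*) (osum : S → S → S) (neg : S → S)
    (γ : S → ℂ) (W1 : S → X) (W2 : S → B)
    (εL : X → ℂ) (ζ : B → ℂ)
    -- Weil's properties of the Weil index
    (hγ_sum : ∀ s t, γ (osum s t) = γ s * γ t)
    (hγ_neg : ∀ s, γ (neg s) * γ s = 1)
    -- the Wall invariant is a homomorphism to the graded Brauer group `Br₂(F)_s`
    (hW1_sum : ∀ s t, W1 (osum s t) = W1 s + W1 t)
    (hW2_sum : ∀ s t, W2 (osum s t) = W2 s + W2 t + cup (W1 s) (W1 t))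
    (hW1_neg : ∀ s, W1 (neg s) = W1 s)
    (hW2_neg : ∀ s, W2 (neg s) = W2 s + cup (W1 s) (W1 s))
    -- (a) Weil/Jacquet–Langlands
    (ha : ∀ s, γ s = εL (W1 s) * ζ (W2 s))
    -- the virtual orthogonal representation ρ and (b) Deligne's formula
    (w1ρ : X) (w2ρ : B) (εLρ : ℂ)
    (hb : εLρ = εL w1ρ * ζ w2ρ)
    -- the two quadratic spaces and the hypothesis `HW(Q,Q̃) = S̄W(ρ)`
    (Q Qt : S)
    (hmain1 : W1 Qt - W1 Q = w1ρ)
    (hmain2 : W2 Qt + W2 Q + cup (W1 Q) (W1 Q) + cup (W1 Qt) (W1 Q) = w2ρ)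
    (hγQ : γ Q ≠ 0) :
    γ Qt * (γ Q)⁻¹ = εLρ := by
  have hnegQ : γ (neg Q) = (γ Q)⁻¹ := eq_inv_of_mul_eq_one_left (hγ_neg Q)
  have hX : ∀ χ : X, -χ = χ := fun χ => neg_eq_of_add_eq_zero_left (hX2 χ)
  have h1 : W1 (osum Qt (neg Q)) = w1ρ := by
    rw [hW1_sum, hW1_neg, ← hmain1, sub_eq_add_neg, hX]
  have h2 : W2 (osum Qt (neg Q)) = w2ρ := by
    rw [hW2_sum, hW2_neg, hW1_neg, ← hmain2]; abel
  calc γ Qt * (γ Q)⁻¹ = γ (osum Qt (neg Q)) := by rw [hγ_sum, hnegQ]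
    _ = εL w1ρ * ζ w2ρ := by rw [ha, h1, h2]
    _ = εLρ := hb.symm
end

section
/- Let F be a field of characteristic 2, Γ its absolute Galois group, and η : Γ → F^×/(F^×)² a continuous homomorphism with open kernel. Choose a lift u_σ ∈ F^× of η(σ) for each σ. Then u_σ u_τ u_{στ}⁻¹ is a square in F^× for all σ, τ, and (since squaring is injective in characteristic 2) the function z_{σ,τ} = √(u_σ u_τ u_{στ}⁻¹) ∈ F^× is a 2-cocycle of Γ valued in F̄^× whose class in Br(F) is independent of the choice of lifts u_σ. -/
/-- Equalities in `Fˣ` can be checked in `F`. -/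
private theorem units_eq_of_val {F : Type*} [Field F] {a b : Fˣ}
    (h : (a : F) = b) : a = b := Units.ext h

/-- Let `F` be a field of characteristic `2`, `Γ` its absolute Galois group
(a profinite, i.e. compact totally disconnected topological, group), and
`η : Γ → F^×/(F^×)²` a continuous homomorphism (i.e. one with open kernel).  Choose a lift
`u σ ∈ F^×` of `η σ` for each `σ`.  Then `u σ * u τ * (u (στ))⁻¹` is a square in `F^×` for
all `σ, τ`, and (squaring being injective in characteristic `2`) the function
`z σ τ = √(u σ * u τ * (u (στ))⁻¹) ∈ F^×` is a 2-cocycle of `Γ` (acting trivially on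
`F^× ⊆ F̄^×`) whose cohomology class is independent of the choice of lifts `u`. -/
theorem stmt19 {F : Type*} [Field F] [CharP F 2]
    (Γ : Type*) [Group Γ] [TopologicalSpace Γ] [IsTopologicalGroup Γ]
    [CompactSpace Γ] [TotallyDisconnectedSpace Γ]
    (sq : Subgroup Fˣ) (hsq : sq = (powMonoidHom 2 : Fˣ →* Fˣ).range)
    (η : Γ →* Fˣ ⧸ sq) (hker : IsOpen (η.ker : Set Γ))
    (u : Γ → Fˣ) (hu : ∀ σ, (QuotientGroup.mk (u σ) : Fˣ ⧸ sq) = η σ) :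
    (∀ σ τ : Γ, ∃ w : Fˣ, u σ * u τ * (u (σ * τ))⁻¹ = w ^ 2) ∧
    (∀ z : Γ → Γ → Fˣ, (∀ σ τ, z σ τ ^ 2 = u σ * u τ * (u (σ * τ))⁻¹) →
      -- `z` is a 2-cocycle (for the trivial action of `Γ` on `F^×`)
      (∀ σ τ ρ : Γ, z τ ρ * z σ (τ * ρ) = z (σ * τ) ρ * z σ τ) ∧
      -- and its class is independent of the choice of lifts: any 2-cocycle built in the same
      -- way from another lift `u'` of `η` is cohomologous to `z`
      (∀ u' : Γ → Fˣ, (∀ σ, (QuotientGroup.mk (u' σ) : Fˣ ⧸ sq) = η σ) →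
        ∀ z' : Γ → Γ → Fˣ, (∀ σ τ, z' σ τ ^ 2 = u' σ * u' τ * (u' (σ * τ))⁻¹) →
          ∃ c : Γ → Fˣ, ∀ σ τ, z' σ τ = z σ τ * (c σ * c τ * (c (σ * τ))⁻¹))) := by
  -- squaring is injective on `Fˣ` in characteristic 2
  have sqinj : ∀ a b : Fˣ, a ^ 2 = b ^ 2 → a = b := by
    intro a b h
    have h' : (a : F) ^ 2 = (b : F) ^ 2 := by exact_mod_cast congrArg Units.val h
    exact Units.ext (frobenius_inj F 2 (by simpa [frobenius_def] using h'))
  -- membership criterion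
  have key : ∀ v : Γ → Fˣ, (∀ σ, (QuotientGroup.mk (v σ) : Fˣ ⧸ sq) = η σ) →
      ∀ σ τ : Γ, ∃ w : Fˣ, v σ * v τ * (v (σ * τ))⁻¹ = w ^ 2 := by
    intro v hv σ τ
    have hmem : v σ * v τ * (v (σ * τ))⁻¹ ∈ sq := by
      have h1 : (QuotientGroup.mk (v σ * v τ * (v (σ * τ))⁻¹) : Fˣ ⧸ sq) = 1 := by
        have h2 : (QuotientGroup.mk (v σ * v τ * (v (σ * τ))⁻¹) : Fˣ ⧸ sq)
            = η σ * η τ * (η (σ * τ))⁻¹ := by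
          simp only [QuotientGroup.mk_mul, QuotientGroup.mk_inv, hv]
        rw [h2, map_mul, mul_inv_eq_one]
      exact (QuotientGroup.eq_one_iff _).mp h1
    rw [hsq] at hmem
    obtain ⟨w, hw⟩ := hmem
    exact ⟨w, by rw [← hw]; rfl⟩
  refine ⟨key u hu, ?_⟩
  intro z hz
  constructor
  · intro σ τ ρ
    apply sqinj
    rw [mul_pow, mul_pow, hz, hz, hz, hz, mul_assoc σ τ ρ]
    apply units_eq_of_val
    simp only [Units.val_mul, Units.val_inv_eq_inv_val]
    field_simp
  · intro u' hu' z' hz'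
    -- choose square roots of `u' σ / u σ`
    have hws : ∀ σ, ∃ w : Fˣ, u' σ * (u σ)⁻¹ = w ^ 2 := by
      intro σ
      have hmem : u' σ * (u σ)⁻¹ ∈ sq := by
        have h1 : (QuotientGroup.mk (u' σ * (u σ)⁻¹) : Fˣ ⧸ sq) = 1 := by
          simp only [QuotientGroup.mk_mul, QuotientGroup.mk_inv, hu, hu', mul_inv_eq_one]
        exact (QuotientGroup.eq_one_iff _).mp h1
      rw [hsq] at hmem
      obtain ⟨w, hw⟩ := hmem
      exact ⟨w, by rw [← hw]; rfl⟩
    choose c hc using hws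
    refine ⟨c, fun σ τ => ?_⟩
    have hc' : ∀ ξ : Γ, u' ξ = u ξ * c ξ ^ 2 := by
      intro ξ
      have h := hc ξ
      apply units_eq_of_val
      have h' : (u' ξ : F) * (u ξ : F)⁻¹ = (c ξ : F) ^ 2 := by
        exact_mod_cast congrArg Units.val h
      have hne : (u ξ : F) ≠ 0 := Units.ne_zero _
      field_simp at h'
      push_cast
      linear_combination h'
    apply sqinj
    rw [hz', mul_pow, hz, mul_pow, mul_pow, inv_pow, hc' σ, hc' τ, hc' (σ * τ)]
    apply units_eq_of_val
    simp only [Units.val_mul, Units.val_inv_eq_inv_val, Units.val_pow_eq_pow_val]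
    field_simp
end
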